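/- arXiv:2205.11331 — 6 statements merged into one kernel-verified Lean document; each statement's English description precedes it below -/
import Mathlib

section
/- For every integer m ≥ 1 and every real b > 0, the function a ↦ log Q_m(√a, √b) is differentiable at every a > 0, with derivative (1/2) · Q_{m+1}(√a, √b) / Q_m(√a, √b) − 1/2. -/
/-- Integer-order generalized Marcum Q-function in squared arguments:
`marcumQ m a b = Q_m(√a, √b)`. -/
noncomputable def marcumQ (m : ℕ) (a b : ℝ) : ℝ :=
  Real.exp (-(a + b) / 2) *
    ∑' n : ℕ, ((a / 2) ^ n / (Nat.factorial n : ℝ)) *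
      ∑ k ∈ Finset.range (n + m), (b / 2) ^ k / (Nat.factorial k : ℝ)

noncomputable def mS (b : ℝ) (j : ℕ) : ℝ :=
  ∑ k ∈ Finset.range j, (b / 2) ^ k / (Nat.factorial k : ℝ)

lemma mS_nonneg {b : ℝ} (hb : 0 ≤ b) (j : ℕ) : 0 ≤ mS b j :=
  Finset.sum_nonneg fun k _ => div_nonneg (pow_nonneg (by linarith) _) (by positivity)

lemma mS_le {b : ℝ} (hb : 0 ≤ b) (j : ℕ) : mS b j ≤ Real.exp (b / 2) :=
  Real.sum_le_exp_of_nonneg (by linarith) j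

lemma summable_mF {b : ℝ} (hb : 0 ≤ b) (m : ℕ) (x : ℝ) :
    Summable (fun n : ℕ => ((x / 2) ^ n / (Nat.factorial n : ℝ)) * mS b (n + m)) := by
  apply Summable.of_norm_bounded (g := fun n => Real.exp (b/2) * ((|x|/2) ^ n / (Nat.factorial n : ℝ)))
    ((Real.summable_pow_div_factorial (|x|/2)).mul_left _)
  intro n
  rw [norm_mul, Real.norm_eq_abs, Real.norm_eq_abs, abs_of_nonneg (mS_nonneg hb _),
    abs_div, abs_pow, abs_div, abs_two, Nat.abs_cast]
  rw [mul_comm]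
  gcongr
  exact mS_le hb _

theorem stmt1 (m : ℕ) (hm : 1 ≤ m) (b : ℝ) (hb : 0 < b) (a : ℝ) (ha : 0 < a) :
    HasDerivAt (fun x : ℝ => Real.log (marcumQ m x b))
      (1 / 2 * (marcumQ (m + 1) a b / marcumQ m a b) - 1 / 2) a := by
  have hb' : (0:ℝ) ≤ b := hb.le
  set S := mS b with hS
  set F : ℕ → ℝ → ℝ := fun n x => ((x / 2) ^ n / (Nat.factorial n : ℝ)) * S (n + m) with hF
  set F' : ℕ → ℝ → ℝ := fun n x =>
    ((n : ℝ) * (x / 2) ^ (n - 1) * (1 / 2)) / (Nat.factorial n : ℝ) * S (n + m) with hF'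
  set u : ℕ → ℝ := fun n =>
    Real.exp (b/2) / 2 * (((a+1) / 2) ^ (n - 1) / (Nat.factorial (n - 1) : ℝ)) with hu
  have hu_sum : Summable u := by
    rw [← summable_nat_add_iff 1]
    simpa [hu] using ((Real.summable_pow_div_factorial ((a+1)/2)).mul_left (Real.exp (b/2)/2))
  have hderiv : ∀ n (x : ℝ), HasDerivAt (F n) (F' n x) x := by
    intro n x
    exact ((((hasDerivAt_id x).div_const 2).pow n).div_const _).mul_const _
  have hbound : ∀ n (x : ℝ), x ∈ Metric.ball (0:ℝ) (a+1) → ‖F' n x‖ ≤ u n := by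
    intro n x hx
    rw [Metric.mem_ball, Real.dist_eq, sub_zero] at hx
    have hxR : |x| ≤ a + 1 := hx.le
    have hSle : S (n + m) ≤ Real.exp (b/2) := mS_le hb' _
    have hSnn : 0 ≤ S (n + m) := mS_nonneg hb' _
    simp only [hF', hu]
    rw [norm_mul, norm_div, Real.norm_eq_abs, Real.norm_eq_abs, Real.norm_eq_abs,
      abs_of_nonneg hSnn, Nat.abs_cast]
    have h1 : |(n : ℝ) * (x / 2) ^ (n - 1) * (1/2)| ≤ (n:ℝ) * ((a+1)/2)^(n-1) * (1/2) := by
      rw [abs_mul, abs_mul, Nat.abs_cast, abs_pow, abs_div, abs_two,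
        abs_of_nonneg (by norm_num : (0:ℝ) ≤ 1/2)]
      gcongr
    calc (|(n : ℝ) * (x / 2) ^ (n - 1) * (1/2)| / (Nat.factorial n : ℝ)) * S (n + m)
        ≤ ((n:ℝ) * ((a+1)/2)^(n-1) * (1/2) / (Nat.factorial n : ℝ)) * Real.exp (b/2) := by
          gcongr
      _ ≤ Real.exp (b/2) / 2 * (((a+1) / 2) ^ (n - 1) / (Nat.factorial (n - 1) : ℝ)) := by
          rcases n with _ | k
          · simp
            positivity
          · have hkf : (0:ℝ) < (Nat.factorial k : ℝ) := by positivity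
            simp only [Nat.succ_sub_one, Nat.factorial_succ]
            apply le_of_eq
            push_cast
            field_simp
  have hsum0 : Summable (fun n => F n a) := summable_mF hb' m a
  have ha_mem : a ∈ Metric.ball (0:ℝ) (a+1) := by
    rw [Metric.mem_ball, Real.dist_eq, sub_zero, abs_of_pos ha]; linarith
  have HD : HasDerivAt (fun z => ∑' n, F n z) (∑' n, F' n a) a :=
    hasDerivAt_tsum_of_isPreconnected hu_sum Metric.isOpen_ball
      (convex_ball _ _).isPreconnected (fun n y _ => hderiv n y) hbound ha_mem hsum0 ha_mem
  have hsum' : Summable (fun n => F' n a) :=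
    Summable.of_norm_bounded hu_sum (fun n => hbound n a ha_mem)
  have hDval : (∑' n, F' n a)
      = (1/2) * ∑' n : ℕ, ((a / 2) ^ n / (Nat.factorial n : ℝ)) * S (n + (m+1)) := by
    rw [hsum'.tsum_eq_zero_add]
    have h0 : F' 0 a = 0 := by simp [hF']
    rw [h0, zero_add, ← tsum_mul_left]
    congr 1
    ext n
    simp only [hF', Nat.succ_sub_one, Nat.factorial_succ]
    have h2 : (Nat.factorial n : ℝ) ≠ 0 := by positivity
    have h3 : n + 1 + m = n + (m + 1) := by omega
    rw [h3]
    push_cast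
    field_simp
  have HQ : HasDerivAt (fun x : ℝ => marcumQ m x b)
      ((1/2) * marcumQ (m+1) a b - (1/2) * marcumQ m a b) a := by
    have h1 : HasDerivAt (fun x : ℝ => -(x + b) / 2) (-1 / 2 : ℝ) a :=
      (((hasDerivAt_id a).add_const b).neg).div_const 2
    have hE := h1.exp
    have hprod := hE.mul HD
    rw [hDval] at hprod
    have hmeq : (fun x : ℝ => marcumQ m x b)
        = fun x => Real.exp (-(x + b) / 2) * ∑' n, F n x := by
      funext x; simp [marcumQ, hF, hS, mS]
    rw [hmeq]
    convert hprod using 1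
    · rfl
    · rfl
    · rfl
    simp only [marcumQ, hS, mS, hF]
    ring
  have hQpos : 0 < marcumQ m a b := by
    rw [marcumQ]
    apply mul_pos (Real.exp_pos _)
    apply Summable.tsum_pos (summable_mF hb' m a) ?_ 0
    · simp only [pow_zero, Nat.factorial_zero, Nat.cast_one, div_one, one_mul, zero_add]
      apply Finset.sum_pos' (fun k _ => by positivity)
      exact ⟨0, Finset.mem_range.2 (by omega), by norm_num⟩
    · intro n
      exact mul_nonneg (by positivity) (mS_nonneg hb' _)
  have hlog := HQ.log (ne_of_gt hQpos)
  convert hlog using 1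
  field_simp
end

section
/- For every integer m ≥ 1 and all reals a, b with a ≥ b > 0, the ratio Q_{m+1}(√a, √b) / Q_m(√a, √b) is strictly smaller than Q_m(√a, √b) / Q_{m−1}(√a, √b); equivalently, Q_{m+1}(√a, √b) · Q_{m−1}(√a, √b) < Q_m(√a, √b)^2 (the Marcum Q-function is strictly log-concave in its integer order on this range). -/
open Finset

namespace MQ

/-- modified-Bessel-type series `F x j = ∑ x^t / (t! (t+j)!)`. -/
noncomputable def F (x : ℝ) (j : ℕ) : ℝ :=
  ∑' t : ℕ, x ^ t / ((t.factorial : ℝ) * ((t + j).factorial : ℝ))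

lemma summable_F_norm (x : ℝ) (j : ℕ) :
    Summable (fun t : ℕ => ‖x ^ t / ((t.factorial : ℝ) * ((t + j).factorial : ℝ))‖) := by
  refine Summable.of_nonneg_of_le (fun t => norm_nonneg _)
    ?_ (Real.summable_pow_div_factorial |x|)
  intro t
  have h1 : (1 : ℝ) ≤ ((t + j).factorial : ℝ) := by
    exact_mod_cast Nat.one_le_iff_ne_zero.mpr (Nat.factorial_ne_zero _)
  have h2 : (0 : ℝ) < (t.factorial : ℝ) := by positivity
  rw [Real.norm_eq_abs, abs_div, abs_pow,
    abs_of_nonneg (by positivity : (0:ℝ) ≤ (t.factorial : ℝ) * ((t + j).factorial : ℝ))]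
  apply div_le_div_of_nonneg_left (by positivity) h2
  nlinarith

lemma summable_F (x : ℝ) (j : ℕ) :
    Summable (fun t : ℕ => x ^ t / ((t.factorial : ℝ) * ((t + j).factorial : ℝ))) :=
  (summable_F_norm x j).of_norm

lemma F_pos {x : ℝ} (hx : 0 < x) (j : ℕ) : 0 < F x j := by
  apply Summable.tsum_pos (summable_F x j) (fun t => by positivity) 0
  positivity

lemma sum_choose (p q N : ℕ) :
    ∑ n ∈ range (N + 1), N.choose n * (N + p + q).choose (n + p)
      = (2 * N + p + q).choose (N + q) := by
  have h := Nat.add_choose_eq N (N + p + q) (N + q)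
  rw [Finset.Nat.sum_antidiagonal_eq_sum_range_succ
      (fun i j => N.choose i * (N + p + q).choose j)] at h
  have h2 : (2 * N + p + q) = N + (N + p + q) := by ring
  rw [h2, h]
  rw [← Finset.sum_subset (Finset.range_subset_range.mpr (by omega : N + 1 ≤ N + q + 1))]
  · apply Finset.sum_congr rfl
    intro n hn
    have hn' : n ≤ N := by
      have := Finset.mem_range.mp hn; omega
    congr 1
    have h3 : N + q - n = (N + p + q) - (n + p) := by omega
    rw [h3, Nat.choose_symm (by omega)]
  · intro n hn hnot
    have : N < n := by
      have := Finset.mem_range.mp hn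
      simp only [Finset.mem_range] at hnot
      omega
    rw [Nat.choose_eq_zero_of_lt this, zero_mul]

lemma coeff_eq (p q N : ℕ) :
    ∑ n ∈ range (N + 1),
      (1 / ((n.factorial : ℝ) * ((n + p).factorial : ℝ))) *
        (1 / (((N - n).factorial : ℝ) * ((N - n + q).factorial : ℝ)))
      = ((2 * N + p + q).choose (N + q) : ℝ)
          / ((N.factorial : ℝ) * ((N + p + q).factorial : ℝ)) := by
  rw [← sum_choose p q N]
  push_cast
  rw [Finset.sum_div]
  apply Finset.sum_congr rfl
  intro n hn
  have hn' : n ≤ N := by have := Finset.mem_range.mp hn; omega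
  have e1 : (N.choose n : ℝ) = (N.factorial : ℝ) / ((n.factorial : ℝ) * ((N - n).factorial : ℝ)) :=
    Nat.cast_choose ℝ hn'
  have e2 : ((N + p + q).choose (n + p) : ℝ)
      = ((N + p + q).factorial : ℝ) / (((n + p).factorial : ℝ) * ((N - n + q).factorial : ℝ)) := by
    have h3 : N + p + q - (n + p) = N - n + q := by omega
    rw [Nat.cast_choose ℝ (show n + p ≤ N + p + q by omega), h3]
  rw [e1, e2]
  have f1 : ((n.factorial : ℝ)) ≠ 0 := by positivity
  have f2 : (((n + p).factorial : ℝ)) ≠ 0 := by positivity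
  have f3 : (((N - n).factorial : ℝ)) ≠ 0 := by positivity
  have f4 : (((N - n + q).factorial : ℝ)) ≠ 0 := by positivity
  have f5 : ((N.factorial : ℝ)) ≠ 0 := by positivity
  have f6 : (((N + p + q).factorial : ℝ)) ≠ 0 := by positivity
  field_simp



lemma cauchy_term_eq (x : ℝ) (p q N : ℕ) :
    ∑ k ∈ range (N + 1),
        (x ^ k / ((k.factorial : ℝ) * ((k + p).factorial : ℝ))) *
          (x ^ (N - k) / (((N - k).factorial : ℝ) * ((N - k + q).factorial : ℝ)))
      = x ^ N * (((2 * N + p + q).choose (N + q) : ℝ)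
          / ((N.factorial : ℝ) * ((N + p + q).factorial : ℝ))) := by
  rw [← coeff_eq p q N, Finset.mul_sum]
  apply Finset.sum_congr rfl
  intro k hk
  have hk' : k ≤ N := by have := Finset.mem_range.mp hk; omega
  have hx : x ^ k * x ^ (N - k) = x ^ N := by
    rw [← pow_add]
    congr 1
    omega
  field_simp
  rw [← hx]

lemma F_mul_F (x : ℝ) (p q : ℕ) :
    F x p * F x q = ∑' N : ℕ, x ^ N * (((2 * N + p + q).choose (N + q) : ℝ)
      / ((N.factorial : ℝ) * ((N + p + q).factorial : ℝ))) := by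
  rw [F, F, tsum_mul_tsum_eq_tsum_sum_range_of_summable_norm
    (summable_F_norm x p) (summable_F_norm x q)]
  exact tsum_congr fun N => cauchy_term_eq x p q N

lemma summable_coeff (x : ℝ) (p q : ℕ) :
    Summable (fun N : ℕ => x ^ N * (((2 * N + p + q).choose (N + q) : ℝ)
      / ((N.factorial : ℝ) * ((N + p + q).factorial : ℝ)))) := by
  apply Summable.congr
    ((summable_norm_sum_mul_range_of_summable_norm
      (summable_F_norm x p) (summable_F_norm x q)).of_norm)
  exact fun N => cauchy_term_eq x p q N

lemma choose_succ_lt (c : ℕ) : (2 * c).choose (c + 1) < (2 * c).choose c := by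
  have h := Nat.choose_succ_right_eq (2 * c) c
  have h2 : 2 * c - c = c := by omega
  rw [h2] at h
  have hpos : 0 < (2 * c).choose c := Nat.choose_pos (by omega)
  have h3 : (2 * c).choose c * c < (2 * c).choose c * (c + 1) :=
    mul_lt_mul_of_pos_left (by omega) hpos
  rw [← h] at h3
  exact lt_of_mul_lt_mul_right h3 (Nat.zero_le _)

lemma turanA (x : ℝ) (hx : 0 < x) (j : ℕ) : F x j * F x (j + 2) < F x (j + 1) ^ 2 := by
  rw [sq, F_mul_F x j (j + 2), F_mul_F x (j + 1) (j + 1)]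
  have hterm : ∀ N : ℕ,
      x ^ N * (((2 * N + j + (j + 2)).choose (N + (j + 2)) : ℝ)
        / ((N.factorial : ℝ) * ((N + j + (j + 2)).factorial : ℝ)))
      < x ^ N * (((2 * N + (j + 1) + (j + 1)).choose (N + (j + 1)) : ℝ)
        / ((N.factorial : ℝ) * ((N + (j + 1) + (j + 1)).factorial : ℝ))) := by
    intro N
    have hc : ((2 * N + j + (j + 2)).choose (N + (j + 2)) : ℝ)
        < ((2 * N + (j + 1) + (j + 1)).choose (N + (j + 1)) : ℝ) := by
      have h : (2 * N + j + (j + 2)).choose (N + (j + 2))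
          < (2 * N + (j + 1) + (j + 1)).choose (N + (j + 1)) := by
        have h1 : 2 * N + j + (j + 2) = 2 * (N + j + 1) := by ring
        have h2 : 2 * N + (j + 1) + (j + 1) = 2 * (N + j + 1) := by ring
        have h3 : N + (j + 2) = (N + j + 1) + 1 := by ring
        have h4 : N + (j + 1) = N + j + 1 := by ring
        rw [h1, h2, h3, h4]
        exact choose_succ_lt (N + j + 1)
      exact_mod_cast h
    rw [show N + j + (j + 2) = N + (j + 1) + (j + 1) from by ring]
    gcongr
  exact Summable.tsum_lt_tsum_of_nonneg (fun N => by positivity) (fun N => (hterm N).le) (hterm 0)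
    (summable_coeff x (j + 1) (j + 1))


lemma turanB (x : ℝ) (hx : 0 < x) : x * F x 1 ^ 2 < F x 0 ^ 2 := by
  rw [sq, sq, F_mul_F x 1 1, F_mul_F x 0 0, ← tsum_mul_left]
  rw [Summable.tsum_eq_zero_add (summable_coeff x 0 0)]
  have h00 : x ^ 0 * (((2 * 0 + 0 + 0).choose (0 + 0) : ℝ)
      / ((Nat.factorial 0 : ℝ) * ((0 + 0 + 0).factorial : ℝ))) = 1 := by norm_num
  have hterm : ∀ N : ℕ,
      x * (x ^ N * (((2 * N + 1 + 1).choose (N + 1) : ℝ)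
        / ((N.factorial : ℝ) * ((N + 1 + 1).factorial : ℝ))))
      ≤ x ^ (N + 1) * (((2 * (N + 1) + 0 + 0).choose ((N + 1) + 0) : ℝ)
        / (((N + 1).factorial : ℝ) * (((N + 1) + 0 + 0).factorial : ℝ))) := by
    intro N
    have e1 : 2 * (N + 1) + 0 + 0 = 2 * N + 1 + 1 := by ring
    have e2 : (N + 1) + 0 = N + 1 := by ring
    have e3 : (N + 1) + 0 + 0 = N + 1 := by ring
    rw [e1, e2, e3, ← mul_assoc, ← pow_succ']
    have hden : ((N + 1).factorial : ℝ) * ((N + 1).factorial : ℝ)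
        ≤ (N.factorial : ℝ) * ((N + 1 + 1).factorial : ℝ) := by
      have : (N + 1).factorial * (N + 1).factorial ≤ N.factorial * (N + 1 + 1).factorial := by
        rw [Nat.factorial_succ (N + 1), Nat.factorial_succ N]
        ring_nf
        omega
      exact_mod_cast this
    apply mul_le_mul_of_nonneg_left _ (by positivity : (0:ℝ) ≤ x ^ (N + 1))
    exact div_le_div_of_nonneg_left (by positivity) (by positivity) hden
  calc (∑' N : ℕ, x * (x ^ N * (((2 * N + 1 + 1).choose (N + 1) : ℝ)
        / ((N.factorial : ℝ) * ((N + 1 + 1).factorial : ℝ)))))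
      ≤ ∑' N : ℕ, x ^ (N + 1) * (((2 * (N + 1) + 0 + 0).choose ((N + 1) + 0) : ℝ)
        / (((N + 1).factorial : ℝ) * (((N + 1) + 0 + 0).factorial : ℝ))) := by
        apply Summable.tsum_le_tsum hterm ((summable_coeff x 1 1).mul_left x)
        exact ((summable_coeff x 0 0).comp_injective (add_left_injective 1))
    _ < _ := by
        rw [h00]
        exact lt_one_add _

noncomputable def Tm (α β : ℝ) (m : ℕ) : ℝ :=
  ∑' n : ℕ, (α ^ n / (n.factorial : ℝ)) *
    ∑ k ∈ Finset.range (n + m), β ^ k / (k.factorial : ℝ)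

noncomputable def Dm (α β : ℝ) (m : ℕ) : ℝ :=
  ∑' n : ℕ, (α ^ n / (n.factorial : ℝ)) * (β ^ (n + m) / ((n + m).factorial : ℝ))

noncomputable def Ghat (α β : ℝ) (m : ℕ) (i : ℕ) : ℝ :=
  α ^ (i - m) * β ^ (m - i) * F (α * β) ((i - m) + (m - i))

variable {α β : ℝ}

lemma summable_Tm (hα : 0 < α) (hβ : 0 < β) (m : ℕ) :
    Summable (fun n : ℕ => (α ^ n / (n.factorial : ℝ)) *
      ∑ k ∈ Finset.range (n + m), β ^ k / (k.factorial : ℝ)) := by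
  have hg : Summable (fun n : ℕ => (α ^ n / (n.factorial : ℝ)) * Real.exp β) :=
    (Real.summable_pow_div_factorial α).mul_right (Real.exp β)
  refine Summable.of_nonneg_of_le (fun n => by positivity) (fun n => ?_) hg
  exact mul_le_mul_of_nonneg_left (Real.sum_le_exp_of_nonneg hβ.le _) (by positivity)

lemma single_le_exp (hβ : 0 < β) (j : ℕ) : β ^ j / (j.factorial : ℝ) ≤ Real.exp β := by
  refine le_trans ?_ (Real.sum_le_exp_of_nonneg hβ.le (j + 1))
  refine Finset.single_le_sum (f := fun k => β ^ k / (k.factorial : ℝ))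
    (fun k _ => by positivity) (Finset.self_mem_range_succ j)

lemma summable_Dm (hα : 0 < α) (hβ : 0 < β) (m : ℕ) :
    Summable (fun n : ℕ => (α ^ n / (n.factorial : ℝ)) *
      (β ^ (n + m) / ((n + m).factorial : ℝ))) := by
  have hg : Summable (fun n : ℕ => (α ^ n / (n.factorial : ℝ)) * Real.exp β) :=
    (Real.summable_pow_div_factorial α).mul_right (Real.exp β)
  refine Summable.of_nonneg_of_le (fun n => by positivity) (fun n => ?_) hg
  exact mul_le_mul_of_nonneg_left (single_le_exp hβ _) (by positivity)

lemma T_succ (hα : 0 < α) (hβ : 0 < β) (m : ℕ) :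
    Tm α β (m + 1) = Tm α β m + Dm α β m := by
  rw [Tm, Tm, Dm, ← Summable.tsum_add (summable_Tm hα hβ m) (summable_Dm hα hβ m)]
  apply tsum_congr
  intro n
  rw [show n + (m + 1) = (n + m) + 1 from rfl, Finset.sum_range_succ, mul_add]

lemma D_eq (m : ℕ) : Dm α β m = β ^ m * F (α * β) m := by
  rw [Dm, F, ← tsum_mul_left]
  apply tsum_congr
  intro n
  rw [pow_add β n m, mul_pow]
  ring

lemma T_pos (hα : 0 < α) (hβ : 0 < β) (m : ℕ) : 0 < Tm α β m := by
  apply Summable.tsum_pos (summable_Tm hα hβ m) (fun n => by positivity) 1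
  apply mul_pos (by positivity)
  apply Finset.sum_pos (fun k _ => by positivity)
  exact Finset.nonempty_range_iff.mpr (by omega)

lemma Ghat_pos (hα : 0 < α) (hβ : 0 < β) (m i : ℕ) : 0 < Ghat α β m i :=
  mul_pos (mul_pos (pow_pos hα _) (pow_pos hβ _)) (F_pos (mul_pos hα hβ) _)

lemma Ghat_zero (m : ℕ) : Ghat α β m 0 = β ^ m * F (α * β) m := by
  simp [Ghat]

lemma Ghat_one (k : ℕ) : Ghat α β (k + 1) 1 = β ^ k * F (α * β) k := by
  rw [Ghat, show 1 - (k + 1) = 0 from by omega, show (k + 1) - 1 = k from by omega]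
  simp

lemma ghat_turan (hα : 0 < α) (hβ : 0 < β) (m : ℕ) (i : ℕ) :
    Ghat α β m i * Ghat α β m (i + 2) < Ghat α β m (i + 1) ^ 2 := by
  have hx : 0 < α * β := mul_pos hα hβ
  set x := α * β with hxdef
  rcases (show i + 2 ≤ m ∨ i + 1 = m ∨ m ≤ i by omega) with h | h | h
  · -- β side
    obtain ⟨d, hd⟩ : ∃ d, m = i + 2 + d := ⟨m - (i + 2), by omega⟩
    subst hd
    rw [Ghat, Ghat, Ghat,
      show i - (i + 2 + d) = 0 from by omega,
      show (i + 2 + d) - i = d + 2 from by omega,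
      show (i + 1) - (i + 2 + d) = 0 from by omega,
      show (i + 2 + d) - (i + 1) = d + 1 from by omega,
      show (i + 2) - (i + 2 + d) = 0 from by omega,
      show (i + 2 + d) - (i + 2) = d from by omega]
    simp only [pow_zero, one_mul, Nat.zero_add]
    have e : β ^ (d + 2) * β ^ d = (β ^ (d + 1)) ^ 2 := by
      rw [← pow_add, ← pow_mul]
      congr 1
      omega
    have key := mul_lt_mul_of_pos_left (turanA x hx d)
      (by positivity : (0:ℝ) < (β ^ (d + 1)) ^ 2)
    calc β ^ (d + 2) * F x (d + 2) * (β ^ d * F x d)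
        = (β ^ (d + 2) * β ^ d) * (F x d * F x (d + 2)) := by ring
      _ = (β ^ (d + 1)) ^ 2 * (F x d * F x (d + 2)) := by rw [e]
      _ < (β ^ (d + 1)) ^ 2 * F x (d + 1) ^ 2 := key
      _ = (β ^ (d + 1) * F x (d + 1)) ^ 2 := by ring
  · -- center
    subst h
    rw [Ghat, Ghat, Ghat,
      show i - (i + 1) = 0 from by omega,
      show (i + 1) - i = 1 from by omega,
      show (i + 1) - (i + 1) = 0 from by omega,
      show (i + 2) - (i + 1) = 1 from by omega,
      show (i + 1) - (i + 2) = 0 from by omega]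
    simp only [pow_zero, one_mul, mul_one, pow_one, Nat.zero_add, Nat.add_zero]
    have hB := turanB x hx
    nlinarith [F_pos hx 0, F_pos hx 1]
  · -- α side
    obtain ⟨d, hd⟩ : ∃ d, i = m + d := ⟨i - m, by omega⟩
    subst hd
    rw [Ghat, Ghat, Ghat,
      show (m + d) - m = d from by omega,
      show m - (m + d) = 0 from by omega,
      show (m + d + 1) - m = d + 1 from by omega,
      show m - (m + d + 1) = 0 from by omega,
      show (m + d + 2) - m = d + 2 from by omega,
      show m - (m + d + 2) = 0 from by omega]
    simp only [pow_zero, one_mul, mul_one, Nat.add_zero]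
    have e : α ^ d * α ^ (d + 2) = (α ^ (d + 1)) ^ 2 := by
      rw [← pow_add, ← pow_mul]
      congr 1
      omega
    have key := mul_lt_mul_of_pos_left (turanA x hx d)
      (by positivity : (0:ℝ) < (α ^ (d + 1)) ^ 2)
    calc α ^ d * F x d * (α ^ (d + 2) * F x (d + 2))
        = (α ^ d * α ^ (d + 2)) * (F x d * F x (d + 2)) := by ring
      _ = (α ^ (d + 1)) ^ 2 * (F x d * F x (d + 2)) := by rw [e]
      _ < (α ^ (d + 1)) ^ 2 * F x (d + 1) ^ 2 := key
      _ = (α ^ (d + 1) * F x (d + 1)) ^ 2 := by ring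

lemma T_split (hα : 0 < α) (hβ : 0 < β) (m : ℕ) :
    Tm α β m = ∑' i : ℕ, Ghat α β m (i + 1) := by
  classical
  set W : ℕ × ℕ → ℝ :=
    fun p => (α ^ p.1 / (p.1.factorial : ℝ)) * (β ^ p.2 / (p.2.factorial : ℝ)) with hWdef
  have hW : Summable W := by
    have h := Summable.mul_of_nonneg (f := fun n : ℕ => α ^ n / (n.factorial : ℝ))
      (g := fun n : ℕ => β ^ n / (n.factorial : ℝ))
      (Real.summable_pow_div_factorial α)
      (Real.summable_pow_div_factorial β)
      (fun n => by dsimp only; positivity) (fun n => by dsimp only; positivity)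
    exact h
  set U : ℕ × ℕ → ℝ := fun p => if p.2 < p.1 + m then W p else 0 with hUdef
  have hU : Summable U := by
    refine Summable.of_nonneg_of_le (fun p => ?_) (fun p => ?_) hW
    · rw [hUdef]; dsimp only; split_ifs
      · positivity
      · exact le_refl 0
    · rw [hUdef]; dsimp only; split_ifs
      · exact le_refl _
      · positivity
  set e : ℕ × ℕ → ℕ × ℕ :=
    fun q => (q.2 + (q.1 + 1 - m), q.2 + (m - (q.1 + 1))) with hedef
  have hinj : Function.Injective e := by
    rintro ⟨i, t⟩ ⟨i', t'⟩ h
    rw [hedef, Prod.ext_iff] at h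
    simp only at h
    obtain ⟨h1, h2⟩ := h
    have : i = i' ∧ t = t' := by omega
    simp [this.1, this.2]
  have hrange : ∀ p : ℕ × ℕ, p ∉ Set.range e → U p = 0 := by
    rintro ⟨n, k⟩ hp
    rw [hUdef]
    dsimp only
    split_ifs with h
    · exfalso
      apply hp
      refine ⟨(n + m - 1 - k, min n k), ?_⟩
      rw [hedef, Prod.ext_iff]
      constructor <;> (simp only; omega)
    · rfl
  have hmem : ∀ q : ℕ × ℕ, (e q).2 < (e q).1 + m := by
    rintro ⟨i, t⟩
    rw [hedef]
    simp only
    omega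
  have hUe : ∀ q : ℕ × ℕ, U (e q) = W (e q) := by
    intro q
    rw [hUdef]
    dsimp only
    rw [if_pos (hmem q)]
  have hsumUe : Summable (fun q => U (e q)) := hU.comp_injective hinj
  have hsumWe : Summable (fun q => W (e q)) := hsumUe.congr hUe
  have step1 : Tm α β m = ∑' n : ℕ, ∑' k : ℕ, U (n, k) := by
    rw [Tm]
    apply tsum_congr
    intro n
    rw [Finset.mul_sum]
    rw [tsum_eq_sum (s := Finset.range (n + m))
      (by
        intro k hk
        rw [hUdef]
        dsimp only
        rw [if_neg (by simpa using hk)])]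
    apply Finset.sum_congr rfl
    intro k hk
    rw [hUdef]
    dsimp only
    rw [if_pos (by simpa using hk)]
  have step2 : (∑' n : ℕ, ∑' k : ℕ, U (n, k)) = ∑' p : ℕ × ℕ, U p :=
    (Summable.tsum_prod' hU fun b => hU.prod_factor b).symm
  have step3 : (∑' p : ℕ × ℕ, U p) = ∑' q : ℕ × ℕ, U (e q) :=
    (hinj.tsum_eq (f := U) (Function.support_subset_iff'.mpr hrange)).symm
  have step4 : (∑' q : ℕ × ℕ, U (e q)) = ∑' q : ℕ × ℕ, W (e q) := tsum_congr hUe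
  have step5 : (∑' q : ℕ × ℕ, W (e q)) = ∑' i : ℕ, ∑' t : ℕ, W (e (i, t)) :=
    Summable.tsum_prod' hsumWe fun b => hsumWe.prod_factor b
  have step6 : ∀ i : ℕ, (∑' t : ℕ, W (e (i, t))) = Ghat α β m (i + 1) := by
    intro i
    set A := i + 1 - m with hA
    set B := m - (i + 1) with hB
    have hAB : A = 0 ∨ B = 0 := by omega
    have hterm : ∀ t : ℕ, W (e (i, t))
        = (α ^ A * β ^ B) * ((α * β) ^ t / ((t.factorial : ℝ) * ((t + (A + B)).factorial : ℝ))) := by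
      intro t
      have hfact : ((t + A).factorial : ℝ) * ((t + B).factorial : ℝ)
          = (t.factorial : ℝ) * ((t + (A + B)).factorial : ℝ) := by
        rcases hAB with h | h <;> rw [h] <;> simp [mul_comm]
      rw [hWdef, hedef]
      dsimp only
      rw [div_mul_div_comm, pow_add α t A, pow_add β t B, hfact, mul_pow]
      ring
    rw [tsum_congr hterm, tsum_mul_left, Ghat]
    rfl
  rw [step1, step2, step3, step4, step5]
  exact tsum_congr step6


lemma key_lt (hα : 0 < α) (hβ : 0 < β) (m : ℕ) :
    Tm α β m * (Ghat α β m 0 - Ghat α β m 1) < Ghat α β m 0 * Ghat α β m 1 := by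
  have hpos : ∀ i, 0 < Ghat α β m i := Ghat_pos hα hβ m
  have hTpos : 0 < Tm α β m := T_pos hα hβ m
  by_cases h01 : Ghat α β m 0 ≤ Ghat α β m 1
  · have h1 : Tm α β m * (Ghat α β m 0 - Ghat α β m 1) ≤ 0 :=
      mul_nonpos_of_nonneg_of_nonpos hTpos.le (by linarith)
    have h2 : 0 < Ghat α β m 0 * Ghat α β m 1 := mul_pos (hpos 0) (hpos 1)
    linarith
  · push_neg at h01
    set G := Ghat α β m with hGdef
    set ρ : ℝ := G 1 / G 0 with hρdef
    have hρ0 : 0 < ρ := div_pos (hpos 1) (hpos 0)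
    have hρ1 : ρ < 1 := (div_lt_one (hpos 0)).mpr h01
    have turan : ∀ i, G i * G (i + 2) < G (i + 1) ^ 2 := ghat_turan hα hβ m
    have step : ∀ i, G (i + 1) * G 0 ≤ G i * G 1 := by
      intro i
      induction i with
      | zero => exact le_of_eq (mul_comm _ _)
      | succ i ih =>
        have t := turan i
        nlinarith [hpos i, hpos (i + 1), hpos (i + 2), hpos 0, hpos 1,
          mul_lt_mul_of_pos_right t (hpos 0),
          mul_le_mul_of_nonneg_left ih (hpos (i + 1)).le]
    have geom : ∀ i, G (i + 1) ≤ G 1 * ρ ^ i := by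
      intro i
      induction i with
      | zero => simp
      | succ i ih =>
        have h := step (i + 1)
        have h2 : G (i + 2) ≤ G (i + 1) * ρ := by
          rw [hρdef, mul_div_assoc']
          rw [le_div_iff₀ (hpos 0)]
          exact h
        calc G (i + 2) ≤ G (i + 1) * ρ := h2
          _ ≤ (G 1 * ρ ^ i) * ρ := mul_le_mul_of_nonneg_right ih hρ0.le
          _ = G 1 * ρ ^ (i + 1) := by rw [mul_assoc, ← pow_succ]
    have strict2 : G 2 < G 1 * ρ ^ 1 := by
      have t := turan 0
      rw [pow_one, hρdef, mul_div_assoc', lt_div_iff₀ (hpos 0)]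
      nlinarith
    have hgeo : Summable (fun i : ℕ => G 1 * ρ ^ i) :=
      (summable_geometric_of_lt_one hρ0.le hρ1).mul_left (G 1)
    have hTlt : Tm α β m < G 1 * (1 - ρ)⁻¹ := by
      rw [T_split hα hβ m, ← tsum_geometric_of_lt_one hρ0.le hρ1, ← tsum_mul_left]
      exact Summable.tsum_lt_tsum_of_nonneg (fun i => (hpos _).le) geom strict2 hgeo
    have hpos2 : 0 < G 0 - G 1 := by linarith
    have hfinal : G 1 * (1 - ρ)⁻¹ * (G 0 - G 1) = G 0 * G 1 := by
      rw [hρdef]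
      have hG0 : G 0 ≠ 0 := (hpos 0).ne'
      field_simp
    calc Tm α β m * (G 0 - G 1) < (G 1 * (1 - ρ)⁻¹) * (G 0 - G 1) :=
        mul_lt_mul_of_pos_right hTlt hpos2
      _ = G 0 * G 1 := hfinal

lemma T_prod (hα : 0 < α) (hβ : 0 < β) (k : ℕ) :
    Tm α β (k + 2) * Tm α β k < Tm α β (k + 1) ^ 2 := by
  have h1 : Tm α β (k + 2) = Tm α β (k + 1) + Dm α β (k + 1) := T_succ hα hβ (k + 1)
  have h2 : Tm α β (k + 1) = Tm α β k + Dm α β k := T_succ hα hβ k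
  have e0 : Dm α β (k + 1) = Ghat α β (k + 1) 0 := by rw [D_eq, Ghat_zero]
  have e1 : Dm α β k = Ghat α β (k + 1) 1 := by rw [D_eq, Ghat_one]
  have key := key_lt hα hβ (k + 1)
  have h3 : Tm α β k = Tm α β (k + 1) - Ghat α β (k + 1) 1 := by
    rw [← e1]; linarith
  rw [h1, h3, e0]
  nlinarith [key]

end MQ

theorem stmt3 (m : ℕ) (hm : 1 ≤ m) (a b : ℝ) (hb : 0 < b) (hab : b ≤ a) :
    marcumQ (m + 1) a b / marcumQ m a b < marcumQ m a b / marcumQ (m - 1) a b ∧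
    marcumQ (m + 1) a b * marcumQ (m - 1) a b < marcumQ m a b ^ 2 := by
  obtain ⟨k, rfl⟩ : ∃ k, m = k + 1 := ⟨m - 1, by omega⟩
  have hα : 0 < a / 2 := by linarith
  have hβ : 0 < b / 2 := by linarith
  have hQ : ∀ j : ℕ, marcumQ j a b = Real.exp (-(a + b) / 2) * MQ.Tm (a / 2) (b / 2) j := by
    intro j; rfl
  have hE : 0 < Real.exp (-(a + b) / 2) := Real.exp_pos _
  have hm1 : k + 1 - 1 = k := by omega
  have hprod := MQ.T_prod hα hβ k
  have hT : ∀ j, 0 < MQ.Tm (a / 2) (b / 2) j := MQ.T_pos hα hβ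
  have hQpos : ∀ j : ℕ, 0 < marcumQ j a b := by
    intro j; rw [hQ j]; exact mul_pos hE (hT j)
  have second : marcumQ (k + 1 + 1) a b * marcumQ (k + 1 - 1) a b < marcumQ (k + 1) a b ^ 2 := by
    rw [hm1, hQ, hQ, hQ]
    have h2 : k + 1 + 1 = k + 2 := by omega
    rw [h2]
    nlinarith [mul_lt_mul_of_pos_left hprod (mul_pos hE hE)]
  refine ⟨?_, second⟩
  rw [div_lt_div_iff₀ (hQpos (k + 1)) (hQpos (k + 1 - 1))]
  calc marcumQ (k + 1 + 1) a b * marcumQ (k + 1 - 1) a b < marcumQ (k + 1) a b ^ 2 := second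
    _ = marcumQ (k + 1) a b * marcumQ (k + 1) a b := sq (marcumQ (k + 1) a b) ▸ by ring
end

section
/- For every integer m ≥ 1 and all reals a ≥ 0, b > 0, Δ > 0, the increment of the log-Marcum-Q function in its second squared argument satisfies: log Q_m(√a, √(b+Δ)) − log Q_m(√a, √b) ≥ ( (1/2) · Q_{m−1}(√a, √(b+Δ)) / Q_m(√a, √(b+Δ)) − 1/2 ) · Δ. -/
open Real Finset
namespace MQ
/-- coefficient `(x/2)^n / n!` -/
noncomputable def c (x : ℝ) (n : ℕ) : ℝ := (x / 2) ^ n / (Nat.factorial n : ℝ)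

lemma summable_c (x : ℝ) : Summable (c x) := Real.summable_pow_div_factorial _

lemma c_nonneg {x : ℝ} (hx : 0 ≤ x) (n : ℕ) : 0 ≤ c x n := by
  unfold c; positivity

/-- Poisson-type tail `∑_{n ≥ p} c x n`. -/
noncomputable def tail (x : ℝ) (p : ℕ) : ℝ := ∑' n, c x (n + p)

lemma summable_tail_term (x : ℝ) (p : ℕ) : Summable fun n => c x (n + p) :=
  (summable_nat_add_iff p).2 (summable_c x)

lemma tail_nonneg {x : ℝ} (hx : 0 ≤ x) (p : ℕ) : 0 ≤ tail x p :=
  tsum_nonneg fun n => c_nonneg hx _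

lemma tail_eq (x : ℝ) (p : ℕ) : tail x p = c x p + tail x (p + 1) := by
  unfold tail
  rw [Summable.tsum_eq_zero_add (summable_tail_term x p)]
  simp only [zero_add]
  congr 1
  apply tsum_congr; intro n; congr 1; omega

lemma tail_succ_le {x : ℝ} (hx : 0 ≤ x) (p : ℕ) : tail x (p + 1) ≤ tail x p := by
  conv_rhs => rw [tail_eq]
  linarith [c_nonneg hx p]

lemma tail_antitone {x : ℝ} (hx : 0 ≤ x) : Antitone (tail x) :=
  antitone_nat_of_succ_le fun p => tail_succ_le hx p

lemma c_mul_c_le {x : ℝ} (hx : 0 ≤ x) {p q r s : ℕ} (hpq : p + q = r + s)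
    (hfac : (r.factorial : ℝ) * s.factorial ≤ (p.factorial : ℝ) * q.factorial) :
    c x p * c x q ≤ c x r * c x s := by
  unfold c
  rw [div_mul_div_comm, div_mul_div_comm, ← pow_add, ← pow_add, hpq]
  apply div_le_div_of_nonneg_left (by positivity) (by positivity) hfac

lemma key_step {x : ℝ} (hx : 0 ≤ x) (p : ℕ) :
    c x p * tail x (p + 2) ≤ c x (p + 1) * tail x (p + 1) := by
  unfold tail
  rw [← tsum_mul_left, ← tsum_mul_left]
  apply Summable.tsum_le_tsum _ ((summable_tail_term x _).mul_left _) ((summable_tail_term x _).mul_left _)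
  intro n
  apply c_mul_c_le hx (by omega)
  push_cast
  have h1 : (p.factorial : ℝ) * (n + p + 1).factorial * ((p : ℝ) + 1) ≤
      (p.factorial : ℝ) * (n + p + 1).factorial * ((n : ℝ) + p + 2) := by
    have : (0:ℝ) < (p.factorial : ℝ) * (n + p + 1).factorial := by positivity
    nlinarith
  have e2 : n + (p+1) = n + p + 1 := by omega
  calc ((p+1).factorial : ℝ) * (n + (p+1)).factorial
      = (p.factorial : ℝ) * (n + p + 1).factorial * ((p : ℝ) + 1) := by
        rw [e2, Nat.factorial_succ]
        push_cast
        ring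
    _ ≤ (p.factorial : ℝ) * (n + p + 1).factorial * ((n : ℝ) + p + 2) := h1
    _ = (p.factorial : ℝ) * (n + (p+2)).factorial := by
        have : (n + (p + 2)).factorial = (n + p + 2) * (n + p + 1).factorial := by
          have : n + (p + 2) = (n + p + 1) + 1 := by omega
          rw [this, Nat.factorial_succ]
        rw [this]
        push_cast
        ring

lemma tail_logconc {x : ℝ} (hx : 0 ≤ x) (p : ℕ) :
    tail x p * tail x (p + 2) ≤ tail x (p + 1) ^ 2 := by
  have h1 := tail_eq x p
  have h2 := tail_eq x (p + 1)
  have h3 := key_step hx p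
  nlinarith [tail_nonneg hx (p + 2), c_nonneg hx p, tail_nonneg hx (p + 1)]

lemma tail_cross {x : ℝ} (hx : 0 ≤ x) {p q : ℕ} (hpq : p ≤ q) :
    tail x (q + 1) * tail x p ≤ tail x (p + 1) * tail x q := by
  induction q, hpq using Nat.le_induction with
  | base => rw [mul_comm]
  | succ q hpq ih =>
    rcases eq_or_lt_of_le (tail_nonneg hx (q + 1)) with h0 | hpos
    · have hq2 : tail x (q + 2) = 0 := le_antisymm (h0 ▸ tail_succ_le hx (q+1))
        (tail_nonneg hx _)
      rw [hq2, zero_mul]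
      exact mul_nonneg (tail_nonneg hx _) (tail_nonneg hx _)
    · have hq : 0 < tail x q := lt_of_lt_of_le hpos (tail_succ_le hx q)
      have lc := tail_logconc hx q
      have h1 : tail x (q + 2) * tail x p * tail x q ≤ tail x (p + 1) * tail x (q + 1) * tail x q := by
        calc tail x (q + 2) * tail x p * tail x q
            = (tail x q * tail x (q + 2)) * tail x p := by ring
          _ ≤ tail x (q + 1) ^ 2 * tail x p :=
              mul_le_mul_of_nonneg_right lc (tail_nonneg hx p)
          _ = (tail x (q + 1) * tail x p) * tail x (q + 1) := by ring
          _ ≤ (tail x (p + 1) * tail x q) * tail x (q + 1) :=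
              mul_le_mul_of_nonneg_right ih (le_of_lt hpos)
          _ = tail x (p + 1) * tail x (q + 1) * tail x q := by ring
      exact le_of_mul_le_mul_right h1 hq

lemma tsum_ite_tail (x : ℝ) (p : ℕ) : ∑' n, (if p ≤ n then c x n else 0) = tail x p := by
  unfold tail
  rw [← Function.Injective.tsum_eq (g := fun n => n + p) (add_left_injective p)]
  · apply tsum_congr; intro n
    rw [if_pos (Nat.le_add_left p n)]
  · intro y hy
    by_cases hpy : p ≤ y
    · exact ⟨y - p, by simpa using Nat.sub_add_cancel hpy⟩
    · exfalso; apply hy; exact if_neg hpy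

lemma summable_slice (a b : ℝ) (m : ℕ) (n : ℕ) :
    Summable fun k => if k < n + m then c a n * c b k else 0 :=
  summable_of_ne_finset_zero (s := Finset.range (n + m))
    (fun k hk => if_neg (by simpa using hk))

lemma summable_uncurry {a b : ℝ} (ha : 0 ≤ a) (hb : 0 ≤ b) (m : ℕ) :
    Summable fun z : ℕ × ℕ => if z.2 < z.1 + m then c a z.1 * c b z.2 else 0 := by
  refine Summable.of_nonneg_of_le (fun z => ?_) (fun z => ?_)
    ((summable_c a).mul_of_nonneg (summable_c b) (fun n => c_nonneg ha n)
      (fun k => c_nonneg hb k))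
  · split
    · exact mul_nonneg (c_nonneg ha _) (c_nonneg hb _)
    · exact le_refl 0
  · split
    · exact le_refl _
    · exact mul_nonneg (c_nonneg ha _) (c_nonneg hb _)

lemma summable_col {a b : ℝ} (ha : 0 ≤ a) (hb : 0 ≤ b) (m k : ℕ) :
    Summable fun n => if k < n + m then c a n * c b k else 0 := by
  have h1 : ∀ n, 0 ≤ (if k < n + m then c a n * c b k else 0) := by
    intro n; split
    · exact mul_nonneg (c_nonneg ha _) (c_nonneg hb _)
    · exact le_refl 0
  have h2 : ∀ n, (if k < n + m then c a n * c b k else 0) ≤ c a n * c b k := by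
    intro n; split
    · exact le_refl _
    · exact mul_nonneg (c_nonneg ha _) (c_nonneg hb _)
  exact Summable.of_nonneg_of_le h1 h2 ((summable_c a).mul_right _)

set_option maxHeartbeats 1000000 in
lemma coeff_form {a b : ℝ} (ha : 0 ≤ a) (hb : 0 ≤ b) (m : ℕ) :
    ∑' n, c a n * ∑ k ∈ Finset.range (n + m), c b k
      = ∑' k, tail a (k + 1 - m) * c b k := by
  have step1 : ∀ n, c a n * ∑ k ∈ Finset.range (n + m), c b k
      = ∑' k, if k < n + m then c a n * c b k else 0 := by
    intro n
    rw [Finset.mul_sum, tsum_eq_sum (s := Finset.range (n + m))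
      (fun k hk => if_neg (by simpa using hk))]
    apply Finset.sum_congr rfl
    intro k hk
    rw [if_pos (by simpa using hk)]
  have step4 : ∀ k, (∑' n, if k < n + m then c a n * c b k else 0)
      = tail a (k + 1 - m) * c b k := by
    intro k
    rw [← tsum_ite_tail a (k + 1 - m), ← tsum_mul_right]
    apply tsum_congr; intro n
    rcases Nat.lt_or_ge k (n + m) with h | h
    · rw [if_pos h, if_pos (by omega)]
    · rw [if_neg (by omega), if_neg (by omega), zero_mul]
  calc ∑' n, c a n * ∑ k ∈ Finset.range (n + m), c b k
      = ∑' (n) (k), if k < n + m then c a n * c b k else 0 := tsum_congr step1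
    _ = ∑' (k) (n), if k < n + m then c a n * c b k else 0 := by
        refine (Summable.tsum_comm' (f := fun n k => if k < n + m then c a n * c b k else 0)
          (summable_uncurry ha hb m) (fun n => summable_slice a b m n)
          (fun k => summable_col ha hb m k)).symm
    _ = ∑' k, tail a (k + 1 - m) * c b k := tsum_congr step4

lemma summable_coeff_s5 {a x : ℝ} (ha : 0 ≤ a) (hx : 0 ≤ x) (j : ℕ) :
    Summable fun k => tail a (k + 1 - j) * c x k :=
  Summable.of_nonneg_of_le (fun k => mul_nonneg (tail_nonneg ha _) (c_nonneg hx _))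
    (fun k => mul_le_mul_of_nonneg_right (tail_antitone ha (Nat.zero_le _)) (c_nonneg hx _))
    ((summable_c x).mul_left _)

lemma tail_AB {a : ℝ} (ha : 0 ≤ a) {m : ℕ} (hm : 1 ≤ m) {k l : ℕ} (hkl : k ≤ l) :
    tail a (l + 1 - (m - 1)) * tail a (k + 1 - m)
      ≤ tail a (k + 1 - (m - 1)) * tail a (l + 1 - m) := by
  rcases le_or_gt m (k + 1) with h | h
  · have ek : k + 1 - (m - 1) = (k + 1 - m) + 1 := by omega
    have el : l + 1 - (m - 1) = (l + 1 - m) + 1 := by omega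
    rw [ek, el]
    exact tail_cross ha (by omega)
  · have ek1 : k + 1 - m = 0 := by omega
    have ek2 : k + 1 - (m - 1) = 0 := by omega
    rw [ek1, ek2, mul_comm]
    exact mul_le_mul_of_nonneg_left
      (tail_antitone ha (by omega : l + 1 - m ≤ l + 1 - (m - 1))) (tail_nonneg ha 0)

lemma c_cross {x y : ℝ} (hx : 0 ≤ x) (hxy : x ≤ y) {k l : ℕ} (hkl : k ≤ l) :
    c y k * c x l ≤ c x k * c y l := by
  have hu : (0:ℝ) ≤ x / 2 := by linarith
  have huv : x / 2 ≤ y / 2 := by linarith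
  have hv : (0:ℝ) ≤ y / 2 := le_trans hu huv
  have ex : (x/2) ^ l = (x/2) ^ k * (x/2) ^ (l - k) := by
    rw [← pow_add]; congr 1; omega
  have ey : (y/2) ^ l = (y/2) ^ k * (y/2) ^ (l - k) := by
    rw [← pow_add]; congr 1; omega
  have key : (y/2) ^ k * (x/2) ^ l ≤ (x/2) ^ k * (y/2) ^ l := by
    rw [ex, ey]
    calc (y/2)^k * ((x/2)^k * (x/2)^(l-k))
        = ((y/2)^k * (x/2)^k) * (x/2)^(l-k) := by ring
      _ ≤ ((y/2)^k * (x/2)^k) * (y/2)^(l-k) :=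
          mul_le_mul_of_nonneg_left (pow_le_pow_left₀ hu huv _) (by positivity)
      _ = (x/2)^k * ((y/2)^k * (y/2)^(l-k)) := by ring
  unfold c
  rw [div_mul_div_comm, div_mul_div_comm]
  gcongr

set_option maxHeartbeats 1000000 in
lemma ratio_cross {a x y : ℝ} (ha : 0 ≤ a) {m : ℕ} (hm : 1 ≤ m) (hx : 0 ≤ x) (hxy : x ≤ y) :
    (∑' k, tail a (k + 1 - (m - 1)) * c y k) * (∑' k, tail a (k + 1 - m) * c x k)
      ≤ (∑' k, tail a (k + 1 - (m - 1)) * c x k) * (∑' k, tail a (k + 1 - m) * c y k) := by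
  have hy : 0 ≤ y := hx.trans hxy
  set A : ℕ → ℝ := fun k => tail a (k + 1 - (m - 1)) with hA
  set B : ℕ → ℝ := fun k => tail a (k + 1 - m) with hB
  have hAnn : ∀ k, 0 ≤ A k := fun k => tail_nonneg ha _
  have hBnn : ∀ k, 0 ≤ B k := fun k => tail_nonneg ha _
  have sAx : Summable fun k => A k * c x k := summable_coeff_s5 ha hx _
  have sAy : Summable fun k => A k * c y k := summable_coeff_s5 ha hy _
  have sBx : Summable fun k => B k * c x k := summable_coeff_s5 ha hx _
  have sBy : Summable fun k => B k * c y k := summable_coeff_s5 ha hy _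
  have spM : Summable fun z : ℕ × ℕ => (A z.1 * c y z.1) * (B z.2 * c x z.2) :=
    sAy.mul_of_nonneg sBx (fun k => mul_nonneg (hAnn k) (c_nonneg hy k))
      (fun k => mul_nonneg (hBnn k) (c_nonneg hx k))
  have spP : Summable fun z : ℕ × ℕ => (A z.1 * c x z.1) * (B z.2 * c y z.2) :=
    sAx.mul_of_nonneg sBy (fun k => mul_nonneg (hAnn k) (c_nonneg hx k))
      (fun k => mul_nonneg (hBnn k) (c_nonneg hy k))
  have e1 : (∑' k, A k * c y k) * (∑' k, B k * c x k)
      = ∑' z : ℕ × ℕ, (A z.1 * c y z.1) * (B z.2 * c x z.2) := Summable.tsum_mul_tsum sAy sBx spM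
  have e2 : (∑' k, A k * c x k) * (∑' k, B k * c y k)
      = ∑' z : ℕ × ℕ, (A z.1 * c x z.1) * (B z.2 * c y z.2) := Summable.tsum_mul_tsum sAx sBy spP
  rw [e1, e2, ← sub_nonneg, ← Summable.tsum_sub spP spM]
  set D : ℕ × ℕ → ℝ :=
    fun z => A z.1 * c x z.1 * (B z.2 * c y z.2) - A z.1 * c y z.1 * (B z.2 * c x z.2) with hD
  have sD : Summable D := spP.sub spM
  have sDswap : Summable fun z : ℕ × ℕ => D (Prod.swap z) :=
    ((Equiv.prodComm ℕ ℕ).summable_iff (f := D)).2 sD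
  have hswap : ∑' z : ℕ × ℕ, D (Prod.swap z) = ∑' z, D z := (Equiv.prodComm ℕ ℕ).tsum_eq D
  have point : ∀ z : ℕ × ℕ, 0 ≤ D z + D (Prod.swap z) := by
    rintro ⟨k, l⟩
    have main : ∀ k l : ℕ, k ≤ l →
        0 ≤ (A k * B l - A l * B k) * (c x k * c y l - c y k * c x l) := by
      intro k l hkl
      exact mul_nonneg (sub_nonneg.2 (tail_AB ha hm hkl)) (sub_nonneg.2 (c_cross hx hxy hkl))
    rcases le_total k l with h | h
    · have e : D (k, l) + D (Prod.swap (k, l))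
          = (A k * B l - A l * B k) * (c x k * c y l - c y k * c x l) := by
        simp only [hD, Prod.swap, Prod.fst, Prod.snd]
        ring
      rw [e]; exact main k l h
    · have e : D (k, l) + D (Prod.swap (k, l))
          = (A l * B k - A k * B l) * (c x l * c y k - c y l * c x k) := by
        simp only [hD, Prod.swap, Prod.fst, Prod.snd]
        ring
      rw [e]; exact main l k h
  have h2 : 0 ≤ ∑' z, (D z + D (Prod.swap z)) := tsum_nonneg point
  rw [Summable.tsum_add sD sDswap, hswap] at h2
  linarith

lemma marcum_def (m : ℕ) (a b : ℝ) :
    marcumQ m a b = Real.exp (-(a + b) / 2) *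
      ∑' n, c a n * ∑ k ∈ Finset.range (n + m), c b k := rfl

lemma summable_main {a b : ℝ} (ha : 0 ≤ a) (hb : 0 ≤ b) (m : ℕ) :
    Summable fun n => c a n * ∑ k ∈ Finset.range (n + m), c b k := by
  refine Summable.of_nonneg_of_le
    (fun n => mul_nonneg (c_nonneg ha n) (Finset.sum_nonneg fun k _ => c_nonneg hb k))
    (fun n => mul_le_mul_of_nonneg_left ?_ (c_nonneg ha n))
    ((summable_c a).mul_right (Real.exp (b / 2)))
  exact Real.sum_le_exp_of_nonneg (by linarith) _

lemma pow_div_fact_le_exp {s : ℝ} (hs : 0 ≤ s) (K : ℕ) :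
    s ^ K / (Nat.factorial K : ℝ) ≤ Real.exp s :=
  calc s ^ K / (Nat.factorial K : ℝ)
      ≤ ∑ k ∈ Finset.range (K + 1), s ^ k / (Nat.factorial k : ℝ) :=
        Finset.single_le_sum (f := fun k => s ^ k / (Nat.factorial k : ℝ))
          (fun k _ => by positivity) (Finset.self_mem_range_succ K)
    _ ≤ Real.exp s := Real.sum_le_exp_of_nonneg hs _

lemma marcum_pos {a : ℝ} (ha : 0 ≤ a) {b : ℝ} (hb : 0 < b) {m : ℕ} (hm : 1 ≤ m) :
    0 < marcumQ m a b := by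
  rw [marcum_def]
  apply mul_pos (Real.exp_pos _)
  have h0 : (0:ℝ) < c a 0 * ∑ k ∈ Finset.range (0 + m), c b k := by
    apply mul_pos
    · simp [c]
    · apply Finset.sum_pos
      · intro k _
        unfold c
        positivity
      · simp; omega
  refine lt_of_lt_of_le h0 (Summable.le_tsum (summable_main ha hb.le m) 0 fun n _ => ?_)
  exact mul_nonneg (c_nonneg ha n) (Finset.sum_nonneg fun k _ => c_nonneg hb.le k)

lemma marcum_nonneg {a : ℝ} (ha : 0 ≤ a) {b : ℝ} (hb : 0 ≤ b) (m : ℕ) :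
    0 ≤ marcumQ m a b := by
  rw [marcum_def]
  apply mul_nonneg (Real.exp_pos _).le
  exact tsum_nonneg fun n =>
    mul_nonneg (c_nonneg ha n) (Finset.sum_nonneg fun k _ => c_nonneg hb k)

lemma hasDerivAt_partialExp (N : ℕ) (t : ℝ) :
    HasDerivAt (fun s : ℝ => ∑ k ∈ Finset.range N, (s / 2) ^ k / (Nat.factorial k : ℝ))
      (1 / 2 * ∑ k ∈ Finset.range (N - 1), (t / 2) ^ k / (Nat.factorial k : ℝ)) t := by
  induction N with
  | zero => simpa using hasDerivAt_const t (0:ℝ)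
  | succ N ih =>
    have h1 : HasDerivAt (fun s : ℝ => s / 2) (1 / 2) t := (hasDerivAt_id t).div_const 2
    have hterm : HasDerivAt (fun s : ℝ => (s / 2) ^ N / (Nat.factorial N : ℝ))
        ((N * (t / 2) ^ (N - 1) * (1 / 2)) / (Nat.factorial N : ℝ)) t :=
      (h1.pow N).div_const _
    have hsum := ih.add hterm
    have efun : (fun s : ℝ => ∑ k ∈ Finset.range (N + 1), (s / 2) ^ k / (Nat.factorial k : ℝ))
        = fun s : ℝ => (∑ k ∈ Finset.range N, (s / 2) ^ k / (Nat.factorial k : ℝ))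
            + (s / 2) ^ N / (Nat.factorial N : ℝ) := by
      funext s; rw [Finset.sum_range_succ]
    rw [efun]
    refine hsum.congr_deriv ?_
    symm
    rcases Nat.eq_zero_or_pos N with rfl | hN
    · simp
    · obtain ⟨M, rfl⟩ : ∃ M, N = M + 1 := ⟨N - 1, by omega⟩
      simp only [Nat.add_sub_cancel]
      rw [Finset.sum_range_succ]
      have hfac : ((M + 1 : ℕ).factorial : ℝ) = ((M : ℝ) + 1) * (M.factorial : ℝ) := by
        rw [Nat.factorial_succ]; push_cast; ring
      rw [hfac]
      have hM : (M.factorial : ℝ) ≠ 0 := Nat.cast_ne_zero.2 (Nat.factorial_ne_zero M)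
      field_simp
      push_cast
      ring

lemma marcum_hasDerivAt {a : ℝ} (ha : 0 ≤ a) {m : ℕ} (hm : 1 ≤ m) {t : ℝ} (ht : 0 < t) :
    HasDerivAt (fun s => marcumQ m a s)
      (1 / 2 * (marcumQ (m - 1) a t - marcumQ m a t)) t := by
  set F : ℕ → ℝ → ℝ := fun n s => Real.exp (-(a + s) / 2) *
    (c a n * ∑ k ∈ Finset.range (n + m), (s / 2) ^ k / (Nat.factorial k : ℝ)) with hF
  set G : ℕ → ℝ → ℝ := fun n s => Real.exp (-(a + s) / 2) * (-(1/2)) *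
      (c a n * ∑ k ∈ Finset.range (n + m), (s / 2) ^ k / (Nat.factorial k : ℝ))
    + Real.exp (-(a + s) / 2) *
      (c a n * (1 / 2 * ∑ k ∈ Finset.range (n + m - 1), (s / 2) ^ k / (Nat.factorial k : ℝ)))
    with hG
  have hderiv : ∀ (n : ℕ) (s : ℝ), s ∈ Set.Ioi (0:ℝ) → HasDerivAt (F n) (G n s) s := by
    intro n s _
    have hinner : HasDerivAt (fun s : ℝ => -(a + s) / 2) (-(1/2)) s := by
      have := (((hasDerivAt_id s).const_add a).neg).div_const 2
      refine this.congr_deriv ?_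
      norm_num
    have hexp : HasDerivAt (fun s : ℝ => Real.exp (-(a + s) / 2))
        (Real.exp (-(a + s) / 2) * (-(1/2))) s := hinner.exp
    have hpoly : HasDerivAt
        (fun s : ℝ => c a n * ∑ k ∈ Finset.range (n + m), (s/2) ^ k / (Nat.factorial k : ℝ))
        (c a n * (1 / 2 * ∑ k ∈ Finset.range (n + m - 1), (s/2) ^ k / (Nat.factorial k : ℝ)))
        s := (hasDerivAt_partialExp (n + m) s).const_mul (c a n)
    exact hexp.mul hpoly
  have hGval : ∀ (n : ℕ) (s : ℝ), 0 < s → G n s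
      = -(1/2) * (Real.exp (-(a + s) / 2) * c a n * ((s/2) ^ (n + m - 1) / (Nat.factorial (n + m - 1) : ℝ))) := by
    intro n s _
    have hsplit : ∑ k ∈ Finset.range (n + m), (s / 2) ^ k / (Nat.factorial k : ℝ)
        = (∑ k ∈ Finset.range (n + m - 1), (s / 2) ^ k / (Nat.factorial k : ℝ))
          + (s/2) ^ (n + m - 1) / (Nat.factorial (n + m - 1) : ℝ) := by
      have h : n + m = (n + m - 1) + 1 := by omega
      conv_lhs => rw [h, Finset.sum_range_succ]
    rw [hG]
    simp only
    rw [hsplit]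
    ring
  have hbound : ∀ (n : ℕ) (s : ℝ), s ∈ Set.Ioi (0:ℝ) →
      ‖G n s‖ ≤ 1/2 * Real.exp (-a/2) * c a n := by
    intro n s hs
    rw [hGval n s hs]
    have hs0 : (0:ℝ) ≤ s := le_of_lt hs
    set T := (s/2) ^ (n + m - 1) / (Nat.factorial (n + m - 1) : ℝ) with hT
    have hterm : T ≤ Real.exp (s/2) := pow_div_fact_le_exp (by linarith) _
    have htermnn : (0:ℝ) ≤ T := by rw [hT]; positivity
    have hXnn : (0:ℝ) ≤ Real.exp (-(a + s) / 2) * c a n * T :=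
      mul_nonneg (mul_nonneg (Real.exp_pos _).le (c_nonneg ha n)) htermnn
    rw [Real.norm_eq_abs, abs_of_nonpos (mul_nonpos_of_nonpos_of_nonneg (by norm_num) hXnn),
      neg_mul, neg_neg]
    have hexpmul : Real.exp (-(a + s) / 2) * Real.exp (s/2) = Real.exp (-a/2) := by
      rw [← Real.exp_add]; congr 1; ring
    have h1 : Real.exp (-(a + s) / 2) * c a n * T
        ≤ Real.exp (-(a + s) / 2) * c a n * Real.exp (s/2) :=
      mul_le_mul_of_nonneg_left hterm
        (mul_nonneg (Real.exp_pos _).le (c_nonneg ha n))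
    have h2 : Real.exp (-(a + s) / 2) * c a n * Real.exp (s/2) = Real.exp (-a/2) * c a n := by
      rw [mul_right_comm, hexpmul]
    nlinarith
  have hsum0 : Summable fun n => F n t := by
    apply Summable.mul_left
    exact summable_main ha ht.le m
  have hu : Summable fun n => 1/2 * Real.exp (-a/2) * c a n := (summable_c a).mul_left _
  have main := hasDerivAt_tsum_of_isPreconnected hu isOpen_Ioi isPreconnected_Ioi
    hderiv hbound (Set.mem_Ioi.2 ht) hsum0 (Set.mem_Ioi.2 ht)
  have efun : (fun z => ∑' n, F n z) = fun z => marcumQ m a z := by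
    funext z
    rw [marcum_def, ← tsum_mul_left]
    exact tsum_congr fun n => rfl
  rw [efun] at main
  have eval : ∑' n, G n t = 1 / 2 * (marcumQ (m - 1) a t - marcumQ m a t) := by
    have eG : ∀ n, G n t = 1/2 *
        (Real.exp (-(a + t) / 2) * (c a n * ∑ k ∈ Finset.range (n + (m-1)), (t/2) ^ k / (Nat.factorial k : ℝ))
         - Real.exp (-(a + t) / 2) * (c a n * ∑ k ∈ Finset.range (n + m), (t/2) ^ k / (Nat.factorial k : ℝ))) := by
      intro n
      have : n + (m - 1) = n + m - 1 := by omega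
      rw [hG, this]
      simp only
      ring
    have sP : Summable fun n => Real.exp (-(a + t) / 2) *
        (c a n * ∑ k ∈ Finset.range (n + (m-1)), (t/2) ^ k / (Nat.factorial k : ℝ)) :=
      Summable.mul_left _ (summable_main ha ht.le (m-1))
    have sQ : Summable fun n => Real.exp (-(a + t) / 2) *
        (c a n * ∑ k ∈ Finset.range (n + m), (t/2) ^ k / (Nat.factorial k : ℝ)) :=
      Summable.mul_left _ (summable_main ha ht.le m)
    calc ∑' n, G n t
        = ∑' n, 1/2 * (Real.exp (-(a + t) / 2) * (c a n * ∑ k ∈ Finset.range (n + (m-1)), (t/2) ^ k / (Nat.factorial k : ℝ))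
            - Real.exp (-(a + t) / 2) * (c a n * ∑ k ∈ Finset.range (n + m), (t/2) ^ k / (Nat.factorial k : ℝ))) :=
          tsum_congr eG
      _ = 1/2 * ∑' n, (Real.exp (-(a + t) / 2) * (c a n * ∑ k ∈ Finset.range (n + (m-1)), (t/2) ^ k / (Nat.factorial k : ℝ))
            - Real.exp (-(a + t) / 2) * (c a n * ∑ k ∈ Finset.range (n + m), (t/2) ^ k / (Nat.factorial k : ℝ))) :=
          tsum_mul_left
      _ = 1/2 * ((∑' n, Real.exp (-(a + t) / 2) * (c a n * ∑ k ∈ Finset.range (n + (m-1)), (t/2) ^ k / (Nat.factorial k : ℝ)))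
            - ∑' n, Real.exp (-(a + t) / 2) * (c a n * ∑ k ∈ Finset.range (n + m), (t/2) ^ k / (Nat.factorial k : ℝ))) := by
          rw [Summable.tsum_sub sP sQ]
      _ = 1 / 2 * (marcumQ (m - 1) a t - marcumQ m a t) := by
          rw [marcum_def, marcum_def, ← tsum_mul_left, ← tsum_mul_left]
          rfl
  rw [eval] at main
  exact main

lemma marcum_coeff {a x : ℝ} (ha : 0 ≤ a) (hx : 0 ≤ x) (j : ℕ) :
    marcumQ j a x = Real.exp (-(a + x) / 2) * ∑' k, tail a (k + 1 - j) * c x k := by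
  rw [marcum_def, coeff_form ha hx j]

lemma marcum_cross {a t y : ℝ} (ha : 0 ≤ a) {m : ℕ} (hm : 1 ≤ m) (ht : 0 < t) (hty : t ≤ y) :
    marcumQ (m - 1) a y * marcumQ m a t ≤ marcumQ (m - 1) a t * marcumQ m a y := by
  have hy : 0 < y := lt_of_lt_of_le ht hty
  have hcr := ratio_cross (a := a) ha hm ht.le hty
  calc marcumQ (m - 1) a y * marcumQ m a t
      = (Real.exp (-(a + y) / 2) * Real.exp (-(a + t) / 2)) *
          ((∑' k, tail a (k + 1 - (m - 1)) * c y k) * (∑' k, tail a (k + 1 - m) * c t k)) := by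
        rw [marcum_coeff ha hy.le (m - 1), marcum_coeff ha ht.le m]; ring
    _ ≤ (Real.exp (-(a + y) / 2) * Real.exp (-(a + t) / 2)) *
          ((∑' k, tail a (k + 1 - (m - 1)) * c t k) * (∑' k, tail a (k + 1 - m) * c y k)) :=
        mul_le_mul_of_nonneg_left hcr
          (mul_nonneg (Real.exp_pos _).le (Real.exp_pos _).le)
    _ = marcumQ (m - 1) a t * marcumQ m a y := by
        rw [marcum_coeff ha ht.le (m - 1), marcum_coeff ha hy.le m]; ring

end MQ

theorem stmt5 (m : ℕ) (hm : 1 ≤ m) (a : ℝ) (ha : 0 ≤ a) (b : ℝ) (hb : 0 < b)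
    (Δ : ℝ) (hΔ : 0 < Δ) :
    Real.log (marcumQ m a (b + Δ)) - Real.log (marcumQ m a b) ≥
      (1 / 2 * (marcumQ (m - 1) a (b + Δ) / marcumQ m a (b + Δ)) - 1 / 2) * Δ := by
  have hc : 0 < b + Δ := by linarith
  set C : ℝ := 1 / 2 * (marcumQ (m - 1) a (b + Δ) / marcumQ m a (b + Δ)) - 1 / 2 with hC
  have hposQ : ∀ t : ℝ, 0 < t → 0 < marcumQ m a t := fun t ht => MQ.marcum_pos ha ht hm
  have hlog : ∀ t ∈ Set.Icc b (b + Δ), HasDerivAt (fun s => Real.log (marcumQ m a s))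
      ((1 / 2 * (marcumQ (m - 1) a t - marcumQ m a t)) / marcumQ m a t) t := by
    intro t htmem
    have ht : 0 < t := lt_of_lt_of_le hb htmem.1
    exact (MQ.marcum_hasDerivAt ha hm ht).log (hposQ t ht).ne'
  have hcont : ContinuousOn (fun s => Real.log (marcumQ m a s)) (Set.Icc b (b + Δ)) :=
    fun t htmem => ((hlog t htmem).continuousAt).continuousWithinAt
  have hint : interior (Set.Icc b (b + Δ)) = Set.Ioo b (b + Δ) := interior_Icc
  have hdiff : DifferentiableOn ℝ (fun s => Real.log (marcumQ m a s))
      (interior (Set.Icc b (b + Δ))) := by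
    rw [hint]
    intro t htmem
    exact ((hlog t (Set.Ioo_subset_Icc_self htmem)).differentiableAt).differentiableWithinAt
  have hbound : ∀ x ∈ interior (Set.Icc b (b + Δ)),
      C ≤ deriv (fun s => Real.log (marcumQ m a s)) x := by
    rw [hint]
    intro t htmem
    have htI : t ∈ Set.Icc b (b + Δ) := Set.Ioo_subset_Icc_self htmem
    have ht : 0 < t := lt_of_lt_of_le hb htI.1
    rw [(hlog t htI).deriv]
    have hQt : 0 < marcumQ m a t := hposQ t ht
    have hQc : 0 < marcumQ m a (b + Δ) := hposQ _ hc
    have cross := MQ.marcum_cross ha hm ht htI.2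
    have hr : marcumQ (m - 1) a (b + Δ) / marcumQ m a (b + Δ)
        ≤ marcumQ (m - 1) a t / marcumQ m a t := (div_le_div_iff₀ hQc hQt).2 cross
    have heq : (1 / 2 * (marcumQ (m - 1) a t - marcumQ m a t)) / marcumQ m a t
        = 1 / 2 * (marcumQ (m - 1) a t / marcumQ m a t) - 1 / 2 := by
      field_simp
    rw [heq, hC]
    linarith
  have key := Convex.mul_sub_le_image_sub_of_le_deriv (convex_Icc b (b + Δ)) hcont hdiff hbound
    b (Set.mem_Icc.2 ⟨le_refl b, by linarith⟩) (b + Δ) (Set.mem_Icc.2 ⟨by linarith, le_refl _⟩)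
    (by linarith)
  have : C * (b + Δ - b) = C * Δ := by ring_nf
  rw [this] at key
  linarith
end

section
/- For every integer m ≥ 1: (i) for each fixed b > 0, the map a ↦ Q_m(√a, √b) is strictly increasing on [0, ∞), i.e., 0 ≤ a₁ < a₂ implies Q_m(√a₁, √b) < Q_m(√a₂, √b); and (ii) for each fixed a ≥ 0, the map b ↦ Q_m(√a, √b) is strictly decreasing on (0, ∞), i.e., 0 < b₁ < b₂ implies Q_m(√a, √b₁) > Q_m(√a, √b₂). -/
open Finset Real Nat

noncomputable def pS (N : ℕ) (x : ℝ) : ℝ := ∑ k ∈ Finset.range N, x ^ k / (Nat.factorial k : ℝ)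

lemma abs_pS_le (N : ℕ) (x : ℝ) : |pS N x| ≤ Real.exp |x| := by
  calc |pS N x| ≤ ∑ k ∈ Finset.range N, |x ^ k / (Nat.factorial k : ℝ)| :=
        Finset.abs_sum_le_sum_abs _ _
    _ = ∑ k ∈ Finset.range N, |x| ^ k / (Nat.factorial k : ℝ) := by
        refine Finset.sum_congr rfl fun k _ => ?_
        rw [abs_div, abs_pow, Nat.abs_cast]
    _ ≤ Real.exp |x| := Real.sum_le_exp_of_nonneg (abs_nonneg x) N

lemma pS_succ (N : ℕ) (x : ℝ) :
    pS (N + 1) x = pS N x + x ^ N / (Nat.factorial N : ℝ) := Finset.sum_range_succ _ _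

lemma hasDerivAt_pS (N : ℕ) (x : ℝ) : HasDerivAt (pS (N + 1)) (pS N x) x := by
  induction N with
  | zero =>
      have : pS 1 = fun _ : ℝ => (1 : ℝ) := by
        funext y; simp [pS]
      rw [this]
      simpa [pS] using hasDerivAt_const x (1 : ℝ)
  | succ M ih =>
      have h2 : HasDerivAt (fun y : ℝ => y ^ (M + 1) / (Nat.factorial (M + 1) : ℝ))
          (x ^ M / (Nat.factorial M : ℝ)) x := by
        have h := (hasDerivAt_pow (M + 1) x).div_const (Nat.factorial (M + 1) : ℝ)
        refine h.congr_deriv (Eq.symm ?_)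
        have hM : (Nat.factorial (M + 1) : ℝ) = (M + 1) * (Nat.factorial M : ℝ) := by
          push_cast [Nat.factorial_succ]; ring
        rw [hM, Nat.add_sub_cancel, Nat.cast_succ]
        have hne : ((M : ℝ) + 1) ≠ 0 := by positivity
        field_simp
      have h3 := ih.add h2
      have he : pS (M + 2) = fun y : ℝ => pS (M + 1) y + y ^ (M + 1) / (Nat.factorial (M + 1) : ℝ) := by
        funext y; exact pS_succ (M + 1) y
      rw [he, pS_succ M x]
      exact h3

lemma pow_div_fact_le_exp {x : ℝ} (hx : 0 ≤ x) (k : ℕ) :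
    x ^ k / (Nat.factorial k : ℝ) ≤ Real.exp x := by
  refine le_trans ?_ (Real.sum_le_exp_of_nonneg hx (k + 1))
  exact Finset.single_le_sum (f := fun j => x ^ j / (Nat.factorial j : ℝ))
    (fun j _ => by positivity) (Finset.self_mem_range_succ k)

lemma summable_pow_mul (x : ℝ) (C : ℕ → ℝ) (K : ℝ) (hC : ∀ n, |C n| ≤ K) :
    Summable fun n : ℕ => x ^ n / (Nat.factorial n : ℝ) * C n := by
  apply Summable.of_norm
  refine Summable.of_nonneg_of_le (fun n => norm_nonneg _) (fun n => ?_)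
    ((Real.summable_pow_div_factorial |x|).mul_right K)
  have : ‖x ^ n / (Nat.factorial n : ℝ) * C n‖ = |x| ^ n / (Nat.factorial n : ℝ) * |C n| := by
    simp [Real.norm_eq_abs, abs_mul, abs_div, abs_pow, Nat.abs_cast]
  rw [this]
  have h1 : (0:ℝ) ≤ |x| ^ n / (Nat.factorial n : ℝ) := by positivity
  exact mul_le_mul_of_nonneg_left (hC n) h1

lemma succ_fact_div (n : ℕ) (R : ℝ) :
    ((n + 1 : ℕ) : ℝ) * R ^ n / (Nat.factorial (n + 1) : ℝ) = R ^ n / (Nat.factorial n : ℝ) := by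
  have hM : (Nat.factorial (n + 1) : ℝ) = ((n : ℝ) + 1) * (Nat.factorial n : ℝ) := by
    push_cast [Nat.factorial_succ]; ring
  rw [hM]
  push_cast
  rw [mul_div_mul_left _ _ (by positivity : ((n : ℝ) + 1) ≠ 0)]

lemma hasDerivAt_tsum_pow (c : ℕ → ℝ) (K : ℝ) (hK : ∀ n, |c n| ≤ K) (A : ℝ) :
    HasDerivAt (fun y : ℝ => ∑' n : ℕ, y ^ n / (Nat.factorial n : ℝ) * c n)
      (∑' n : ℕ, A ^ n / (Nat.factorial n : ℝ) * c (n + 1)) A := by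
  have hK0 : 0 ≤ K := le_trans (abs_nonneg _) (hK 0)
  set R : ℝ := |A| + 1 with hR
  set u : ℕ → ℝ := fun n => (n : ℝ) * R ^ (n - 1) / (Nat.factorial n : ℝ) * K with hu
  have hRpos : 0 < R := by positivity
  have hsu : Summable u := by
    rw [← summable_nat_add_iff 1]
    have : (fun n : ℕ => u (n + 1)) = fun n : ℕ => R ^ n / (Nat.factorial n : ℝ) * K := by
      funext n
      simp only [hu, Nat.add_sub_cancel]
      rw [show ((n + 1 : ℕ) : ℝ) = ((n + 1 : ℕ) : ℝ) from rfl, succ_fact_div]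
    rw [this]
    exact (Real.summable_pow_div_factorial R).mul_right K
  have hmain : HasDerivAt (fun y : ℝ => ∑' n : ℕ, y ^ n / (Nat.factorial n : ℝ) * c n)
      (∑' n : ℕ, ((n : ℝ) * A ^ (n - 1) / (Nat.factorial n : ℝ)) * c n) A := by
    refine hasDerivAt_tsum_of_isPreconnected hsu (Metric.isOpen_ball (x := (0:ℝ)) (ε := R))
      ((convex_ball (0:ℝ) R).isPreconnected)
      (g := fun n y => y ^ n / (Nat.factorial n : ℝ) * c n)
      (g' := fun n y => ((n : ℝ) * y ^ (n - 1) / (Nat.factorial n : ℝ)) * c n)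
      (fun n y _ => ((hasDerivAt_pow n y).div_const _).mul_const (c n))
      (fun n y hy => ?_) (y₀ := A) ?_ (summable_pow_mul A c K hK) ?_
    · have hyR : |y| ≤ R := le_of_lt (mem_ball_zero_iff.mp hy)
      have : ‖((n : ℝ) * y ^ (n - 1) / (Nat.factorial n : ℝ)) * c n‖
          = (n : ℝ) * |y| ^ (n - 1) / (Nat.factorial n : ℝ) * |c n| := by
        simp [Real.norm_eq_abs, abs_mul, abs_div, abs_pow, Nat.abs_cast]
      rw [this, hu]
      show (n : ℝ) * |y| ^ (n - 1) / (Nat.factorial n : ℝ) * |c n|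
          ≤ (n : ℝ) * R ^ (n - 1) / (Nat.factorial n : ℝ) * K
      gcongr
      exact hK n
    · simpa [mem_ball_zero_iff, hR] using lt_add_of_pos_right |A| one_pos
    · simpa [mem_ball_zero_iff, hR] using lt_add_of_pos_right |A| one_pos
  convert hmain using 1
  have hsd : Summable fun n : ℕ => ((n : ℝ) * A ^ (n - 1) / (Nat.factorial n : ℝ)) * c n := by
    apply Summable.of_norm
    refine Summable.of_nonneg_of_le (fun n => norm_nonneg _) (fun n => ?_) hsu
    have : ‖((n : ℝ) * A ^ (n - 1) / (Nat.factorial n : ℝ)) * c n‖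
        = (n : ℝ) * |A| ^ (n - 1) / (Nat.factorial n : ℝ) * |c n| := by
      simp [Real.norm_eq_abs, abs_mul, abs_div, abs_pow, Nat.abs_cast]
    rw [this, hu]
    show (n : ℝ) * |A| ^ (n - 1) / (Nat.factorial n : ℝ) * |c n|
        ≤ (n : ℝ) * R ^ (n - 1) / (Nat.factorial n : ℝ) * K
    gcongr
    · exact le_of_lt (by rw [hR]; exact lt_add_of_pos_right |A| one_pos)
    · exact hK n
  rw [Summable.tsum_eq_zero_add hsd]
  simp only [Nat.cast_zero, zero_mul, zero_div, zero_mul, zero_add]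
  refine tsum_congr fun n => ?_
  rw [Nat.add_sub_cancel, succ_fact_div]

lemma summable_mul_pS (w : ℕ → ℝ) (hw : Summable fun n => |w n|) (t : ℕ → ℕ) (B : ℝ) :
    Summable fun n : ℕ => w n * pS (t n) B := by
  apply Summable.of_norm
  refine Summable.of_nonneg_of_le (fun n => norm_nonneg _) (fun n => ?_)
    (hw.mul_right (Real.exp |B|))
  rw [Real.norm_eq_abs, abs_mul]
  exact mul_le_mul_of_nonneg_left (abs_pS_le _ _) (abs_nonneg _)

lemma hasDerivAt_tsum_pS (w : ℕ → ℝ) (hw : Summable fun n => |w n|) (M : ℕ) (B : ℝ) :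
    HasDerivAt (fun y : ℝ => ∑' n : ℕ, w n * pS (n + M + 1) y)
      (∑' n : ℕ, w n * pS (n + M) B) B := by
  set R : ℝ := |B| + 1 with hR
  have hBR : B ∈ Metric.ball (0 : ℝ) R := by
    simp only [mem_ball_zero_iff, Real.norm_eq_abs, hR]
    exact lt_add_of_pos_right |B| one_pos
  refine hasDerivAt_tsum_of_isPreconnected (u := fun n => |w n| * Real.exp R)
    (hw.mul_right _) (Metric.isOpen_ball (x := (0:ℝ)) (ε := R))
    ((convex_ball (0:ℝ) R).isPreconnected)
    (g' := fun n y => w n * pS (n + M) y)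
    (fun n y _ => (hasDerivAt_pS (n + M) y).const_mul (w n))
    (fun n y hy => ?_) (y₀ := B) hBR (summable_mul_pS w hw _ B) hBR
  rw [Real.norm_eq_abs, abs_mul]
  have h1 : |pS (n + M) y| ≤ Real.exp R :=
    le_trans (abs_pS_le _ _)
      (Real.exp_le_exp.mpr (le_of_lt (by simpa [Real.norm_eq_abs] using mem_ball_zero_iff.mp hy)))
  exact mul_le_mul_of_nonneg_left h1 (abs_nonneg _)

lemma hasDerivAt_exp_part (b x : ℝ) :
    HasDerivAt (fun a : ℝ => Real.exp (-(a + b) / 2)) (Real.exp (-(x + b) / 2) * (-(1/2))) x := by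
  have h0 : HasDerivAt (fun a : ℝ => -(a + b) / 2) (-(1/2)) x := by
    have h := (((hasDerivAt_id x).add_const b).neg).div_const 2
    refine h.congr_deriv (Eq.symm ?_)
    norm_num
  exact (Real.hasDerivAt_exp _).comp x h0

theorem stmt7 (m : ℕ) (hm : 1 ≤ m) :
    (∀ b : ℝ, 0 < b → ∀ a₁ a₂ : ℝ, 0 ≤ a₁ → a₁ < a₂ →
      marcumQ m a₁ b < marcumQ m a₂ b) ∧
    (∀ a : ℝ, 0 ≤ a → ∀ b₁ b₂ : ℝ, 0 < b₁ → b₁ < b₂ →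
      marcumQ m a b₁ > marcumQ m a b₂) := by
  obtain ⟨M, rfl⟩ : ∃ M, m = M + 1 := ⟨m - 1, (Nat.succ_pred_eq_of_pos hm).symm⟩
  constructor
  · -- strictly increasing in a
    intro b hb a₁ a₂ ha₁ hlt
    have hB : 0 < b / 2 := by positivity
    set c : ℕ → ℝ := fun n => pS (n + (M + 1)) (b / 2) with hc
    have hKc : ∀ n, |c n| ≤ Real.exp |b / 2| := fun n => abs_pS_le _ _
    set F : ℝ → ℝ := fun y => ∑' n : ℕ, y ^ n / (Nat.factorial n : ℝ) * c n with hF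
    set F' : ℝ → ℝ := fun y => ∑' n : ℕ, y ^ n / (Nat.factorial n : ℝ) * c (n + 1) with hF'
    have hfun : (fun a => marcumQ (M + 1) a b) =
        fun a => Real.exp (-(a + b) / 2) * F (a / 2) := rfl
    have hd : ∀ x : ℝ, HasDerivAt (fun a => marcumQ (M + 1) a b)
        (Real.exp (-(x + b) / 2) * (-(1/2)) * F (x / 2)
          + Real.exp (-(x + b) / 2) * (F' (x / 2) * (1/2))) x := by
      intro x
      rw [hfun]
      have h1 : HasDerivAt (fun a : ℝ => F (a / 2)) (F' (x / 2) * (1/2)) x := by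
        have h2 := (hasDerivAt_tsum_pow c _ hKc (x / 2)).comp x
          ((hasDerivAt_id x).div_const 2)
        exact h2
      exact (hasDerivAt_exp_part b x).mul h1
    have hpos : ∀ x : ℝ, 0 ≤ x →
        0 < Real.exp (-(x + b) / 2) * (-(1/2)) * F (x / 2)
          + Real.exp (-(x + b) / 2) * (F' (x / 2) * (1/2)) := by
      intro x hx
      have hsF : Summable fun n : ℕ => (x / 2) ^ n / (Nat.factorial n : ℝ) * c n :=
        summable_pow_mul _ _ _ hKc
      have hsF' : Summable fun n : ℕ => (x / 2) ^ n / (Nat.factorial n : ℝ) * c (n + 1) :=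
        summable_pow_mul _ _ _ (fun n => hKc (n + 1))
      have hdiff : F' (x / 2) - F (x / 2)
          = ∑' n : ℕ, (x / 2) ^ n / (Nat.factorial n : ℝ)
              * ((b / 2) ^ (n + (M + 1)) / (Nat.factorial (n + (M + 1)) : ℝ)) := by
        rw [hF', hF, ← Summable.tsum_sub hsF' hsF]
        refine tsum_congr fun n => ?_
        have h3 : c (n + 1) - c n
            = (b / 2) ^ (n + (M + 1)) / (Nat.factorial (n + (M + 1)) : ℝ) := by
          have h4 : n + 1 + (M + 1) = n + (M + 1) + 1 := by omega
          rw [hc]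
          simp only [h4, pS_succ]
          ring
        rw [← h3]; ring
      have hdpos : 0 < F' (x / 2) - F (x / 2) := by
        rw [hdiff]
        refine Summable.tsum_pos ?_ (fun n => ?_) 0 ?_
        · refine summable_pow_mul _ _ (Real.exp (b / 2)) (fun n => ?_)
          rw [abs_of_nonneg (by positivity)]
          exact pow_div_fact_le_exp hB.le _
        · positivity
        · have hx2 : (0:ℝ) < (b / 2) ^ (0 + (M + 1)) / (Nat.factorial (0 + (M + 1)) : ℝ) := by
            positivity
          simpa using hx2
      have heq : Real.exp (-(x + b) / 2) * (-(1/2)) * F (x / 2)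
          + Real.exp (-(x + b) / 2) * (F' (x / 2) * (1/2))
          = (1/2) * Real.exp (-(x + b) / 2) * (F' (x / 2) - F (x / 2)) := by ring
      rw [heq]
      positivity
    have key : StrictMonoOn (fun a => marcumQ (M + 1) a b) (Set.Ici 0) := by
      refine strictMonoOn_of_deriv_pos (convex_Ici 0)
        (fun x _ => ((hd x).continuousAt).continuousWithinAt) (fun x hx => ?_)
      rw [(hd x).deriv]
      exact hpos x (le_of_lt (by simpa using hx))
    exact key (Set.mem_Ici.mpr ha₁) (Set.mem_Ici.mpr (ha₁.trans hlt.le)) hlt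
  · -- strictly decreasing in b
    intro a ha b₁ b₂ hb₁ hlt
    set w : ℕ → ℝ := fun n => (a / 2) ^ n / (Nat.factorial n : ℝ) with hw
    have hwabs : Summable fun n => |w n| := by
      have : (fun n => |w n|) = fun n => |a / 2| ^ n / (Nat.factorial n : ℝ) := by
        funext n
        rw [hw]
        simp [abs_div, abs_pow, Nat.abs_cast]
      rw [this]
      exact Real.summable_pow_div_factorial _
    set G : ℝ → ℝ := fun y => ∑' n : ℕ, w n * pS (n + M + 1) y with hG
    set G' : ℝ → ℝ := fun y => ∑' n : ℕ, w n * pS (n + M) y with hG'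
    have hfun : (fun b => marcumQ (M + 1) a b) =
        fun b => Real.exp (-(a + b) / 2) * G (b / 2) := rfl
    have hde : ∀ x : ℝ, HasDerivAt (fun b => marcumQ (M + 1) a b)
        (Real.exp (-(a + x) / 2) * (-(1/2)) * G (x / 2)
          + Real.exp (-(a + x) / 2) * (G' (x / 2) * (1/2))) x := by
      intro x
      rw [hfun]
      have hexp : HasDerivAt (fun y : ℝ => Real.exp (-(a + y) / 2))
          (Real.exp (-(a + x) / 2) * (-(1/2))) x := by
        have h0 : HasDerivAt (fun y : ℝ => -(a + y) / 2) (-(1/2)) x := by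
          have h := (((hasDerivAt_id x).const_add a).neg).div_const 2
          refine h.congr_deriv (Eq.symm ?_)
          norm_num
        exact (Real.hasDerivAt_exp _).comp x h0
      have h1 : HasDerivAt (fun y : ℝ => G (y / 2)) (G' (x / 2) * (1/2)) x := by
        have h2 := (hasDerivAt_tsum_pS w hwabs M (x / 2)).comp x
          ((hasDerivAt_id x).div_const 2)
        exact h2
      exact hexp.mul h1
    have hneg : ∀ x : ℝ, 0 < x →
        Real.exp (-(a + x) / 2) * (-(1/2)) * G (x / 2)
          + Real.exp (-(a + x) / 2) * (G' (x / 2) * (1/2)) < 0 := by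
      intro x hx
      have hsG : Summable fun n : ℕ => w n * pS (n + M + 1) (x / 2) :=
        summable_mul_pS w hwabs _ _
      have hsG' : Summable fun n : ℕ => w n * pS (n + M) (x / 2) :=
        summable_mul_pS w hwabs _ _
      have hdiff : G (x / 2) - G' (x / 2)
          = ∑' n : ℕ, w n * ((x / 2) ^ (n + M) / (Nat.factorial (n + M) : ℝ)) := by
        rw [hG, hG', ← Summable.tsum_sub hsG hsG']
        refine tsum_congr fun n => ?_
        rw [pS_succ]
        ring
      have hdpos : 0 < G (x / 2) - G' (x / 2) := by
        rw [hdiff]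
        have hwn : ∀ n, 0 ≤ w n := fun n => by
          rw [hw]; positivity
        refine Summable.tsum_pos ?_ (fun n => ?_) 0 ?_
        · apply Summable.of_norm
          refine Summable.of_nonneg_of_le (fun n => norm_nonneg _) (fun n => ?_)
            (hwabs.mul_right (Real.exp |x / 2|))
          rw [Real.norm_eq_abs, abs_mul]
          refine mul_le_mul_of_nonneg_left ?_ (abs_nonneg _)
          rw [abs_div, abs_pow, Nat.abs_cast]
          exact pow_div_fact_le_exp (abs_nonneg _) _
        · have := hwn n
          positivity
        · have hw0 : w 0 = 1 := by rw [hw]; simp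
          rw [hw0, one_mul]
          positivity
      have heq : Real.exp (-(a + x) / 2) * (-(1/2)) * G (x / 2)
          + Real.exp (-(a + x) / 2) * (G' (x / 2) * (1/2))
          = -((1/2) * Real.exp (-(a + x) / 2) * (G (x / 2) - G' (x / 2))) := by ring
      rw [heq, neg_lt_zero]
      positivity
    have key : StrictAntiOn (fun b => marcumQ (M + 1) a b) (Set.Ici 0) := by
      refine strictAntiOn_of_deriv_neg (convex_Ici 0)
        (fun x _ => ((hde x).continuousAt).continuousWithinAt) (fun x hx => ?_)
      rw [(hde x).deriv]
      exact hneg x (by simpa using hx)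
    exact key (Set.mem_Ici.mpr hb₁.le) (Set.mem_Ici.mpr (hb₁.le.trans hlt.le)) hlt
end

section
/- Let n be a positive integer and let R and Φ be n×n complex Hermitian positive-definite matrices. Then log det R + Re(tr(R⁻¹ Φ)) ≥ log det Φ + n, with equality if and only if R = Φ. Consequently, R = Φ is the unique maximizer of the expected complete-data log-likelihood R ↦ −N·(N_R·log π + log det R + tr(R⁻¹ Φ)) over Hermitian positive-definite matrices (for any N > 0). -/
open Matrix ComplexOrder

private lemma stmt15_conj {n : ℕ} {A B : Matrix (Fin n) (Fin n) ℂ} (hA : A.PosDef)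
    (hB : IsUnit B.det) : (Bᴴ * A * B).PosDef := by
  exact hA.conjTranspose_mul_mul_same
    (Matrix.mulVec_injective_iff_isUnit.mpr ((Matrix.isUnit_iff_isUnit_det B).mpr hB))

private lemma stmt15_trace {n : ℕ} {A : Matrix (Fin n) (Fin n) ℂ} (hA : A.IsHermitian) :
    A.trace = ∑ i, (hA.eigenvalues i : ℂ) := by
  conv_lhs => rw [hA.spectral_theorem, Unitary.conjStarAlgAut_apply]
  rw [Matrix.trace_mul_comm, ← Matrix.mul_assoc,
    (Matrix.mem_unitaryGroup_iff').mp (Matrix.IsHermitian.eigenvectorUnitary hA).2,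
    Matrix.one_mul, Matrix.trace_diagonal]
  simp [Function.comp]

private lemma stmt15_one {n : ℕ} {A : Matrix (Fin n) (Fin n) ℂ} (hA : A.IsHermitian)
    (h : ∀ i, hA.eigenvalues i = 1) : A = 1 := by
  have hd : Matrix.diagonal (RCLike.ofReal ∘ hA.eigenvalues : Fin n → ℂ) = 1 := by
    have : (RCLike.ofReal ∘ hA.eigenvalues : Fin n → ℂ) = fun _ => 1 := by
      funext i; simp [Function.comp, h i]
    rw [this, Matrix.diagonal_one]
  rw [hA.spectral_theorem, Unitary.conjStarAlgAut_apply, hd, Matrix.mul_one]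
  exact (Matrix.mem_unitaryGroup_iff).mp (Matrix.IsHermitian.eigenvectorUnitary hA).2

open Matrix ComplexOrder in
theorem stmt15 (n : ℕ) (hn : 0 < n) (R Φ : Matrix (Fin n) (Fin n) ℂ)
    (hR : R.PosDef) (hΦ : Φ.PosDef) :
    Real.log R.det.re + ((R⁻¹ * Φ).trace).re ≥ Real.log Φ.det.re + n ∧
    (Real.log R.det.re + ((R⁻¹ * Φ).trace).re = Real.log Φ.det.re + n ↔ R = Φ) ∧
    (∀ NN : ℝ, 0 < NN → R ≠ Φ →
      -NN * ((n : ℝ) * Real.log Real.pi + Real.log R.det.re + ((R⁻¹ * Φ).trace).re) <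
      -NN * ((n : ℝ) * Real.log Real.pi + Real.log Φ.det.re + ((Φ⁻¹ * Φ).trace).re)) := by
  classical
  -- determinants
  have hdR : (0:ℝ) < R.det.re := (Complex.lt_def.mp hR.det_pos).1
  have hdΦ : (0:ℝ) < Φ.det.re := (Complex.lt_def.mp hΦ.det_pos).1
  have hdRc : R.det = (R.det.re : ℂ) := by
    have := (Complex.lt_def.mp hR.det_pos).2
    exact (Complex.ext (by simp) (by simp [← this])).symm
  have hdΦc : Φ.det = (Φ.det.re : ℂ) := by
    have := (Complex.lt_def.mp hΦ.det_pos).2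
    exact (Complex.ext (by simp) (by simp [← this])).symm
  -- square root of Φ
  open scoped MatrixOrder in set S := CFC.sqrt Φ with hSdef
  have hS : S.PosSemidef := open scoped MatrixOrder in (CFC.sqrt_nonneg Φ).posSemidef
  have hSS : S * S = Φ := open scoped MatrixOrder in CFC.sqrt_mul_sqrt_self Φ hΦ.posSemidef.nonneg
  have hSdet : IsUnit S.det := by
    have h1 : S.det * S.det = Φ.det := by rw [← Matrix.det_mul, hSS]
    have : S.det ≠ 0 := by
      intro h; apply hΦ.det_pos.ne'
      rw [← h1, h, mul_zero]
    exact this.isUnit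
  have hSH : Sᴴ = S := hS.isHermitian
  -- M = S R⁻¹ S
  set M := S * R⁻¹ * S with hMdef
  have hM : M.PosDef := by
    have := stmt15_conj hR.inv hSdet
    rwa [hSH] at this
  set μ := hM.isHermitian.eigenvalues with hμdef
  have hμpos : ∀ i, 0 < μ i := hM.eigenvalues_pos
  -- trace identity
  have htr : (R⁻¹ * Φ).trace = M.trace := by
    rw [← hSS, hMdef, ← Matrix.mul_assoc, Matrix.trace_mul_comm (R⁻¹ * S) S,
      ← Matrix.mul_assoc]
  have htrsum : ((R⁻¹ * Φ).trace).re = ∑ i, μ i := by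
    rw [htr, stmt15_trace hM.isHermitian]
    push_cast
    simp
    rfl
  -- determinant identity
  have hdetM : M.det = Φ.det * R.det⁻¹ := by
    rw [hMdef, Matrix.det_mul, Matrix.det_mul, Matrix.det_nonsing_inv,
      Ring.inverse_eq_inv]
    rw [← hSS, Matrix.det_mul]
    ring
  have hdetMμ : M.det = ((∏ i, μ i : ℝ) : ℂ) := by
    rw [hM.isHermitian.det_eq_prod_eigenvalues]
    push_cast
    rfl
  have hprodμ : (∏ i, μ i : ℝ) = Φ.det.re / R.det.re := by
    have : ((∏ i, μ i : ℝ) : ℂ) = ((Φ.det.re / R.det.re : ℝ) : ℂ) := by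
      rw [← hdetMμ, hdetM, hdRc, hdΦc]
      simp [Complex.ofReal_div, div_eq_mul_inv]
    exact_mod_cast this
  have hsumlog : ∑ i, Real.log (μ i) = Real.log Φ.det.re - Real.log R.det.re := by
    rw [← Real.log_prod (fun i _ => (hμpos i).ne'), hprodμ,
      Real.log_div hdΦ.ne' hdR.ne']
  -- key inequality
  have hterm : ∀ i : Fin n, Real.log (μ i) + 1 ≤ μ i := fun i => by
    have := Real.log_le_sub_one_of_pos (hμpos i)
    linarith
  have hsum_ineq : ∑ i, (Real.log (μ i) + 1) ≤ ∑ i, μ i :=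
    Finset.sum_le_sum fun i _ => hterm i
  have hsum_expand : ∑ i, (Real.log (μ i) + 1)
      = (Real.log Φ.det.re - Real.log R.det.re) + n := by
    rw [Finset.sum_add_distrib, hsumlog]
    simp
  have hmain : Real.log R.det.re + ((R⁻¹ * Φ).trace).re ≥ Real.log Φ.det.re + n := by
    rw [htrsum]
    have := hsum_ineq
    rw [hsum_expand] at this
    linarith
  -- trace of Φ⁻¹Φ
  have hΦinv : Φ⁻¹ * Φ = 1 := Matrix.nonsing_inv_mul Φ hΦ.det_pos.ne'.isUnit
  have htrΦ : ((Φ⁻¹ * Φ).trace).re = n := by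
    rw [hΦinv, Matrix.trace_one]
    simp
  -- equality iff
  have hiff : Real.log R.det.re + ((R⁻¹ * Φ).trace).re = Real.log Φ.det.re + n ↔ R = Φ := by
    constructor
    · intro he
      have hsum_eq : ∑ i, (Real.log (μ i) + 1) = ∑ i, μ i := by
        rw [hsum_expand, ← htrsum]
        linarith
      have hall : ∀ i ∈ Finset.univ, Real.log (μ i) + 1 = μ i := by
        intro i hi
        have := (Finset.sum_eq_sum_iff_of_le (fun j (_ : j ∈ Finset.univ) => hterm j)).mp
          hsum_eq i hi
        linarith
      have hμ1 : ∀ i, μ i = 1 := by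
        intro i
        by_contra hne
        have := Real.log_lt_sub_one_of_pos (hμpos i) hne
        have := hall i (Finset.mem_univ i)
        linarith
      have hM1 : M = 1 := stmt15_one hM.isHermitian hμ1
      -- S R⁻¹ S = 1 → R = Φ
      have hRinv : R⁻¹ = S⁻¹ * S⁻¹ := by
        have h2 : S⁻¹ * (S * R⁻¹ * S) * S⁻¹ = R⁻¹ := by
          rw [← Matrix.mul_assoc, Matrix.mul_assoc (S⁻¹ * (S * R⁻¹)),
            Matrix.mul_nonsing_inv _ hSdet, Matrix.mul_one, ← Matrix.mul_assoc,
            Matrix.nonsing_inv_mul _ hSdet, Matrix.one_mul]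
        rw [← h2, ← hMdef, hM1, Matrix.mul_one]
      have hΦinv2 : Φ⁻¹ = S⁻¹ * S⁻¹ := by
        rw [← hSS, Matrix.mul_inv_rev]
      have : R⁻¹ = Φ⁻¹ := by rw [hRinv, hΦinv2]
      calc R = R⁻¹⁻¹ := (Matrix.nonsing_inv_nonsing_inv R hR.det_pos.ne'.isUnit).symm
        _ = Φ⁻¹⁻¹ := by rw [this]
        _ = Φ := Matrix.nonsing_inv_nonsing_inv Φ hΦ.det_pos.ne'.isUnit
    · rintro rfl
      have h1 : ((R⁻¹ * R).trace).re = n := by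
        rw [Matrix.nonsing_inv_mul R hR.det_pos.ne'.isUnit, Matrix.trace_one]
        simp
      rw [h1]
  refine ⟨hmain, hiff, ?_⟩
  intro NN hNN hne
  have hstrict : Real.log Φ.det.re + n < Real.log R.det.re + ((R⁻¹ * Φ).trace).re :=
    lt_of_le_of_ne hmain (fun h => hne (hiff.mp h.symm))
  rw [htrΦ]
  have : (n : ℝ) * Real.log Real.pi + Real.log Φ.det.re + n
      < (n : ℝ) * Real.log Real.pi + Real.log R.det.re + ((R⁻¹ * Φ).trace).re := by
    linarith
  nlinarith [this, hNN]
end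

section
/- Let n be a positive integer, let Φ be an n×n complex Hermitian positive-definite matrix, let α > 0, and set ρ = α/(1+α). Then for every n×n complex Hermitian positive-definite matrix R, (1+α)·log det R + Re(tr(R⁻¹ (Φ + α·I))) ≥ (1+α)·log det((1−ρ)·Φ + ρ·I) + (1+α)·n, with equality if and only if R = (1−ρ)·Φ + ρ·I. Consequently, the unique maximizer of the KL-penalized EM objective over Hermitian positive-definite matrices is the shrinkage estimate R = (1−ρ)·Φ + ρ·I. -/
open Matrix ComplexOrder

-- real positive smul of PosDef is PosDef
lemma myPosDef_smul {n : ℕ} {M : Matrix (Fin n) (Fin n) ℂ} (hM : M.PosDef) {c : ℝ} (hc : 0 < c) :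
    (((c : ℝ) : ℂ) • M).PosDef := by
  refine Matrix.PosDef.of_dotProduct_mulVec_pos ?_ (fun x hx => ?_)
  · have := hM.1
    simp only [Matrix.IsHermitian, conjTranspose_smul, this.eq, Complex.star_def,
      Complex.conj_ofReal]
  · have h := hM.dotProduct_mulVec_pos hx
    rw [Complex.lt_def] at h ⊢
    simp only [smul_mulVec, dotProduct_smul, smul_eq_mul, Complex.mul_re, Complex.mul_im,
      Complex.ofReal_re, Complex.ofReal_im, Complex.zero_re, Complex.zero_im] at *
    constructor
    · nlinarith [h.1]
    · simp [h.2.symm]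

-- sqrt of PosDef is PosDef
open scoped MatrixOrder in
lemma myPosDef_sqrt {n : ℕ} {R : Matrix (Fin n) (Fin n) ℂ} (hR : R.PosDef) :
    (CFC.sqrt R).PosDef := by
  refine Matrix.PosDef.of_dotProduct_mulVec_pos (CFC.sqrt_nonneg R).posSemidef.1 (fun x hx => ?_)
  have hnn := (posSemidef_iff_dotProduct_mulVec.mp (CFC.sqrt_nonneg R).posSemidef).2 x
  rcases lt_or_eq_of_le hnn with h | h
  · exact h
  · exfalso
    have h0 : CFC.sqrt R *ᵥ x = 0 :=
      ((CFC.sqrt_nonneg R).posSemidef.dotProduct_mulVec_zero_iff x).mp h.symm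
    have hRx : R *ᵥ x = 0 := by
      rw [← CFC.sqrt_mul_sqrt_self R hR.posSemidef.nonneg, ← mulVec_mulVec, h0, mulVec_zero]
    have := hR.dotProduct_mulVec_pos hx
    rw [hRx, dotProduct_zero] at this
    exact lt_irrefl _ this

-- conjugation of PosDef by invertible hermitian
lemma myPosDef_conj {n : ℕ} {M B : Matrix (Fin n) (Fin n) ℂ} (hM : M.PosDef)
    (hB : B.det ≠ 0) : (Bᴴ * M * B).PosDef := by
  refine Matrix.PosDef.of_dotProduct_mulVec_pos (isHermitian_conjTranspose_mul_mul B hM.1) (fun x hx => ?_)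
  have hBx : B *ᵥ x ≠ 0 := fun h => hx (eq_zero_of_mulVec_eq_zero hB h)
  have := hM.dotProduct_mulVec_pos hBx
  simpa only [star_mulVec, dotProduct_mulVec, vecMul_vecMul] using this

-- trace of hermitian = sum of eigenvalues
lemma myTrace_eq {n : ℕ} {C : Matrix (Fin n) (Fin n) ℂ} (hC : C.IsHermitian) :
    C.trace = ∑ i, (hC.eigenvalues i : ℂ) := by
  conv_lhs => rw [hC.spectral_theorem]
  rw [Unitary.conjStarAlgAut_apply, Matrix.trace_mul_cycle]
  rw [Unitary.coe_star_mul_self, Matrix.one_mul, Matrix.trace_diagonal]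
  rfl

-- core: log det R + Re tr(R⁻¹ M) ≥ log det M + n, equality iff R = M
open scoped MatrixOrder in
lemma myCore {n : ℕ} {R M : Matrix (Fin n) (Fin n) ℂ} (hR : R.PosDef) (hM : M.PosDef) :
    (Real.log M.det.re + n ≤ Real.log R.det.re + ((R⁻¹ * M).trace).re) ∧
    (Real.log R.det.re + ((R⁻¹ * M).trace).re = Real.log M.det.re + n ↔ R = M) := by
  classical
  set Q := CFC.sqrt R with hQdef
  have hQ : Q.PosDef := myPosDef_sqrt hR
  have hQQ : Q * Q = R := CFC.sqrt_mul_sqrt_self R hR.posSemidef.nonneg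
  have hQdet : Q.det ≠ 0 := hQ.det_pos.ne'
  have hQinv : (Q⁻¹).PosDef := hQ.inv
  have hQinvH : Q⁻¹ᴴ = Q⁻¹ := ((hQ.isHermitian).inv).eq
  set C := Q⁻¹ * M * Q⁻¹ with hCdef
  have hC : C.PosDef := by
    have := myPosDef_conj hM (show (Q⁻¹).det ≠ 0 by
      rw [Matrix.det_nonsing_inv, Ring.inverse_eq_inv]
      exact inv_ne_zero hQdet)
    rwa [hQinvH] at this
  -- trace identity
  have hRinv : R⁻¹ = Q⁻¹ * Q⁻¹ := by rw [← hQQ, Matrix.mul_inv_rev]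
  have htr : (R⁻¹ * M).trace = C.trace := by
    rw [hRinv, Matrix.mul_assoc, Matrix.trace_mul_comm, hCdef, Matrix.mul_assoc]
  -- eigenvalues
  set μ := hC.isHermitian.eigenvalues with hμdef
  have hμpos : ∀ i, 0 < μ i := fun i => hC.eigenvalues_pos i
  have htrsum : ((R⁻¹ * M).trace).re = ∑ i, μ i := by
    rw [htr, myTrace_eq hC.isHermitian]
    simp [Complex.re_sum]; rfl
  -- determinants are positive reals
  have hdetR : R.det = ((R.det.re : ℝ) : ℂ) := by
    have := hR.det_pos
    rw [Complex.lt_def] at this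
    exact Complex.ext rfl (by simpa using this.2.symm)
  have hdetM : M.det = ((M.det.re : ℝ) : ℂ) := by
    have := hM.det_pos
    rw [Complex.lt_def] at this
    exact Complex.ext rfl (by simpa using this.2.symm)
  have hdetRpos : 0 < R.det.re := by
    have := hR.det_pos; rw [Complex.lt_def] at this; simpa using this.1
  have hdetMpos : 0 < M.det.re := by
    have := hM.det_pos; rw [Complex.lt_def] at this; simpa using this.1
  -- det C = det M / det R
  have hQdet2 : Q.det * Q.det = R.det := by rw [← Matrix.det_mul, hQQ]
  have hdetC : C.det = M.det / R.det := by
    rw [hCdef, Matrix.det_mul, Matrix.det_mul, Matrix.det_nonsing_inv, Ring.inverse_eq_inv,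
      ← hQdet2]
    field_simp
  have hprodμ : (∏ i, μ i) = M.det.re / R.det.re := by
    have h1 : C.det = ∏ i, (μ i : ℂ) := hC.isHermitian.det_eq_prod_eigenvalues
    rw [hdetC, hdetM, hdetR, ← Complex.ofReal_div, ← Complex.ofReal_prod] at h1
    exact (Complex.ofReal_inj.mp h1).symm
  have hlog : Real.log M.det.re - Real.log R.det.re = ∑ i, Real.log (μ i) := by
    rw [← Real.log_div hdetMpos.ne' hdetRpos.ne', ← hprodμ,
      Real.log_prod fun i _ => (hμpos i).ne']
  -- the scalar inequality
  have hkey : ∀ i : Fin n, Real.log (μ i) + 1 ≤ μ i := fun i => by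
    have := Real.log_le_sub_one_of_pos (hμpos i); linarith
  have hsum : (∑ i, Real.log (μ i)) + n ≤ ∑ i, μ i := by
    calc (∑ i, Real.log (μ i)) + n = ∑ i : Fin n, (Real.log (μ i) + 1) := by
          rw [Finset.sum_add_distrib]; simp
      _ ≤ ∑ i, μ i := Finset.sum_le_sum fun i _ => hkey i
  constructor
  · rw [htrsum]; linarith
  constructor
  · intro heq
    -- all eigenvalues = 1
    have hall : ∀ i : Fin n, μ i = 1 := by
      by_contra hne
      push_neg at hne
      obtain ⟨j, hj⟩ := hne
      have hstrict : (∑ i, Real.log (μ i)) + n < ∑ i, μ i := by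
        have : ∑ i : Fin n, (Real.log (μ i) + 1) < ∑ i, μ i :=
          Finset.sum_lt_sum (fun i _ => hkey i)
            ⟨j, Finset.mem_univ j, by
              have := Real.log_lt_sub_one_of_pos (hμpos j) hj; linarith⟩
        calc (∑ i, Real.log (μ i)) + n = ∑ i : Fin n, (Real.log (μ i) + 1) := by
              rw [Finset.sum_add_distrib]; simp
          _ < ∑ i, μ i := this
      rw [htrsum] at heq; linarith
    -- hence C = 1
    have hCone : C = 1 := by
      have hfun : (RCLike.ofReal ∘ μ : Fin n → ℂ) = fun _ => 1 := funext fun i => by simp [hall i]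
      have hst := hC.isHermitian.spectral_theorem
      rw [Unitary.conjStarAlgAut_apply, hfun, Matrix.diagonal_one, Matrix.mul_one] at hst
      rw [hst]
      exact Unitary.coe_mul_star_self _
    -- hence M = R
    have hkey2 : Q * C * Q = Q * 1 * Q := by rw [hCone]
    rw [hCdef, Matrix.mul_one, hQQ] at hkey2
    rw [← hkey2, ← Matrix.mul_assoc, ← Matrix.mul_assoc,
      Matrix.mul_nonsing_inv _ (isUnit_iff_ne_zero.mpr hQdet),
      Matrix.one_mul, Matrix.mul_assoc,
      Matrix.nonsing_inv_mul _ (isUnit_iff_ne_zero.mpr hQdet), Matrix.mul_one]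
  · intro hRM
    subst hRM
    rw [Matrix.nonsing_inv_mul _ (isUnit_iff_ne_zero.mpr hR.det_pos.ne'), Matrix.trace_one]
    simp

open Matrix ComplexOrder in
theorem stmt16 (n : ℕ) (hn : 0 < n) (Φ : Matrix (Fin n) (Fin n) ℂ) (hΦ : Φ.PosDef)
    (α : ℝ) (hα : 0 < α) (ρ : ℝ) (hρ : ρ = α / (1 + α)) :
    ∀ R : Matrix (Fin n) (Fin n) ℂ, R.PosDef →
      ((1 + α) * Real.log R.det.re +
          ((R⁻¹ * (Φ + ((α : ℂ)) • (1 : Matrix (Fin n) (Fin n) ℂ))).trace).re ≥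
        (1 + α) * Real.log ((((1 - ρ : ℝ) : ℂ) • Φ +
          ((ρ : ℝ) : ℂ) • (1 : Matrix (Fin n) (Fin n) ℂ)).det.re) + (1 + α) * n) ∧
      ((1 + α) * Real.log R.det.re +
          ((R⁻¹ * (Φ + ((α : ℂ)) • (1 : Matrix (Fin n) (Fin n) ℂ))).trace).re =
        (1 + α) * Real.log ((((1 - ρ : ℝ) : ℂ) • Φ +
          ((ρ : ℝ) : ℂ) • (1 : Matrix (Fin n) (Fin n) ℂ)).det.re) + (1 + α) * n ↔
        R = ((1 - ρ : ℝ) : ℂ) • Φ + ((ρ : ℝ) : ℂ) • (1 : Matrix (Fin n) (Fin n) ℂ)) := by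
  intro R hR
  have h1α : (0:ℝ) < 1 + α := by linarith
  have hρpos : 0 < ρ := by rw [hρ]; positivity
  have hρlt : ρ < 1 := by rw [hρ, div_lt_one h1α]; linarith
  set M : Matrix (Fin n) (Fin n) ℂ :=
    ((1 - ρ : ℝ) : ℂ) • Φ + ((ρ : ℝ) : ℂ) • 1 with hMdef
  have hM : M.PosDef :=
    (myPosDef_smul hΦ (by linarith : (0:ℝ) < 1 - ρ)).add
      (myPosDef_smul Matrix.PosDef.one hρpos)
  have hc1 : (1 + α) * (1 - ρ) = 1 := by rw [hρ]; field_simp; ring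
  have hc2 : (1 + α) * ρ = α := by rw [hρ]; field_simp
  have hSM : Φ + ((α : ℂ)) • (1 : Matrix (Fin n) (Fin n) ℂ) = (((1 + α : ℝ)) : ℂ) • M := by
    rw [hMdef, smul_add, smul_smul, smul_smul, ← Complex.ofReal_mul, ← Complex.ofReal_mul,
      hc1, hc2]
    norm_num
  have htr : ((R⁻¹ * (Φ + ((α : ℂ)) • (1 : Matrix (Fin n) (Fin n) ℂ))).trace).re
      = (1 + α) * ((R⁻¹ * M).trace).re := by
    rw [hSM, Matrix.mul_smul, Matrix.trace_smul, smul_eq_mul, Complex.re_ofReal_mul]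
  obtain ⟨hle, hiff⟩ := myCore hR hM
  rw [htr]
  constructor
  · nlinarith [hle]
  · constructor
    · intro heq
      apply hiff.mp
      have : (1 + α) * (Real.log R.det.re + ((R⁻¹ * M).trace).re)
          = (1 + α) * (Real.log M.det.re + n) := by ring_nf; ring_nf at heq; linarith
      exact mul_left_cancel₀ h1α.ne' this
    · intro hRM
      have := hiff.mpr hRM
      nlinarith [this]
end
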